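/- arXiv:1511.08644 — 11 statements merged into one kernel-verified Lean document; each statement's English description precedes it below -/
import Mathlib

section
/- Let k ≥ 1 and t ≥ 0 be integers, let m = k(t+1) and n = m², and consider the scheduling instance with budget T = t+1 = √n/k. Set α = 1/|P_{t+1}(n)| (so that ∑_{I ⊆ [m]×[m]} y_I = 1) and define y_I = α for every I ⊆ [m]×[m] with |I| ≤ t+1 and y_I = 0 otherwise. Then there exists a real P₀ > 1 such that for every real P ≥ P₀ this y satisfies all conditions of the level-t Lasserre relaxation of LP(T): (i) ∑_I y_I = 1; (ii) ∑_I y_I Z_I Z_Iᵀ is positive semidefinite, where Z_I are (t+1)-zeta vectors; (iii) ∑_I g_0(x_I) y_I Z_I Z_Iᵀ is positive semidefinite and, for every ℓ ∈ [m], ∑_I g_ℓ(x_I) y_I Z_I Z_Iᵀ is positive semidefinite, where Z_I are t-zeta vectors and x_I is the 0/1 indicator vector of I. -/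
open Finset Matrix

/-
Only the demand constraints carry weights of both signs. For block `ℓ`, the slack `g_ℓ(I)` is at
least `P^(ℓ+1) - D_ℓ` when `I` contains a job of block `ℓ`, and at least `-D_ℓ` otherwise. The
linear forms `c ↦ Z_I ⬝ c` over the sets `I` with `|I| ≤ t + 1` meeting block `ℓ` have no
common zero besides `c = 0` (block `ℓ` has `m > t` jobs; invert the subset sums), so the sum
of all `(Z_I ⬝ c)²` is at most `C` times the sum over these sets. As `D_ℓ ≤ m P^ℓ`, the
positive part dominates as soon as `P ≥ m C`.
-/

noncomputable def zetaVec (m d : ℕ) (I : Finset (Fin m × Fin m)) :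
    {J : Finset (Fin m × Fin m) // J.card ≤ d} → ℝ :=
  fun J => if (J : Finset (Fin m × Fin m)) ⊆ I then 1 else 0

noncomputable def schedDemand (P : ℝ) (l : ℕ) : ℝ := ∑ j ∈ Finset.range (l + 1), P ^ j

noncomputable def schedG0 (m : ℕ) (T : ℝ) (I : Finset (Fin m × Fin m)) : ℝ :=
  T - I.card

noncomputable def schedG (m : ℕ) (P : ℝ) (l : Fin m) (I : Finset (Fin m × Fin m)) : ℝ :=
  (∑ p ∈ I.filter (fun p => p.1 ≤ l), P ^ (p.1.1 + 1)) - schedDemand P l.1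

section QuadraticForm

variable {ι κ : Type*} [Fintype ι] [Fintype κ]

theorem dotProduct_sum_smul_vecMulVec_self_mulVec (w : ι → ℝ) (v : ι → κ → ℝ) (c : κ → ℝ) :
    c ⬝ᵥ ((∑ i, w i • vecMulVec (v i) (v i)) *ᵥ c) = ∑ i, w i * (v i ⬝ᵥ c) ^ 2 := by
  simp only [sum_mulVec, smul_mulVec, vecMulVec_mulVec, dotProduct_sum, dotProduct_smul]
  refine sum_congr rfl fun i _ => ?_
  rw [dotProduct_comm c (v i), smul_eq_mul, MulOpposite.smul_eq_mul_unop, MulOpposite.unop_op]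
  ring

theorem posSemidef_sum_smul_vecMulVec_self (w : ι → ℝ) (v : ι → κ → ℝ)
    (h : ∀ c, 0 ≤ ∑ i, w i * (v i ⬝ᵥ c) ^ 2) :
    (∑ i, w i • vecMulVec (v i) (v i)).PosSemidef := by
  refine .of_dotProduct_mulVec_nonneg ?_ fun c => ?_
  · ext a b
    simp [Matrix.sum_apply, vecMulVec_apply, mul_comm]
  · rw [star_trivial, dotProduct_sum_smul_vecMulVec_self_mulVec]
    exact h c

end QuadraticForm

theorem exists_sum_sq_le_mul_sum_sq {V ι : Type*} [AddCommGroup V] [Module ℝ V]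
    (φ : ι → V →ₗ[ℝ] ℝ) (s u : Finset ι) (hs : ∀ v, (∀ i ∈ s, φ i v = 0) → v = 0) :
    ∃ C, 0 ≤ C ∧ ∀ v, ∑ i ∈ u, φ i v ^ 2 ≤ C * ∑ i ∈ s, φ i v ^ 2 := by
  classical
  let Φ : V →ₗ[ℝ] s → ℝ := LinearMap.pi fun i => φ i
  have hΦ : LinearMap.ker Φ = ⊥ :=
    LinearMap.ker_eq_bot'.mpr fun v hv => hs v fun i hi => congrFun hv ⟨i, hi⟩
  obtain ⟨L, hL⟩ := Φ.exists_leftInverse_of_injective hΦ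
  let a : ι → s → ℝ := fun i j => φ i (L (Pi.single j 1))
  have hexpand : ∀ i v, φ i v = ∑ j : s, φ j v * a i j := by
    intro i v
    conv_lhs => rw [← LinearMap.id_apply (R := ℝ) v, ← hL, LinearMap.comp_apply,
      pi_eq_sum_univ' (Φ v)]
    simp [a, Φ]
  refine ⟨∑ i ∈ u, ∑ j, a i j ^ 2, by positivity, fun v => ?_⟩
  rw [sum_mul, ← sum_coe_sort s]
  refine sum_le_sum fun i _ => ?_
  rw [hexpand i v, mul_comm]
  exact sum_mul_sq_le_sq_mul_sq _ _ _

section SubsetSums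

variable {α M : Type*} [DecidableEq α] [AddCommGroup M]

theorem eq_zero_of_sum_powerset_eq_zero {p : Finset α → Prop}
    (hp : ∀ ⦃J K⦄, K ⊆ J → p J → p K) (f : Finset α → M)
    (h : ∀ J, p J → ∑ K ∈ J.powerset, f K = 0) : ∀ J, p J → f J = 0 := by
  intro J
  induction J using Finset.strongInduction with
  | H J ih =>
    intro hJ
    have hsub : ∑ K ∈ J.powerset.erase J, f K = 0 :=
      sum_eq_zero fun K hK =>
        have hKJ : K ⊂ J := Finset.ssubset_iff_subset_ne.mpr
          ⟨mem_powerset.mp (mem_of_mem_erase hK), ne_of_mem_erase hK⟩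
        ih K hKJ (hp hKJ.subset hJ)
    rw [← h J hJ, ← add_sum_erase _ _ (mem_powerset_self J), hsub, add_zero]

/- Möbius inversion along the sets avoiding `q ∈ R` gives `f J = -f (insert q J)`; as no `J` with
`|J| ≤ t` contains `R`, iterating pushes the cardinality past `t`, where `f` vanishes. -/
theorem eq_zero_of_sum_powerset_eq_zero_of_meets {t : ℕ} (R : Finset α) (hR : t < R.card)
    (f : Finset α → M) (hf : ∀ J, t < J.card → f J = 0)
    (h : ∀ I : Finset α, I.card ≤ t + 1 → (∃ q ∈ I, q ∈ R) → ∑ J ∈ I.powerset, f J = 0) :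
    f = 0 := by
  have hpair : ∀ q ∈ R, ∀ J, q ∉ J ∧ J.card ≤ t → f J + f (insert q J) = 0 := by
    intro q hq
    refine eq_zero_of_sum_powerset_eq_zero (fun J K hKJ hJ => ⟨fun hqK => hJ.1 (hKJ hqK),
      (card_le_card hKJ).trans hJ.2⟩) _ fun J ⟨hqJ, hJ⟩ => ?_
    rw [sum_add_distrib, ← sum_powerset_insert hqJ]
    exact h _ (by rw [card_insert_of_notMem hqJ]; omega)
      ⟨q, mem_insert_self q J, hq⟩
  have hdown : ∀ d J, t < J.card + d → f J = 0 := by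
    intro d
    induction d with
    | zero => exact hf
    | succ d ih =>
      intro J hJ
      by_cases hcard : t < J.card
      · exact hf J hcard
      obtain ⟨q, hqR, hqJ⟩ : ∃ q ∈ R, q ∉ J := by
        by_contra! hRJ
        exact hcard (hR.trans_le (card_le_card hRJ))
      have hins := ih (insert q J) (by rw [card_insert_of_notMem hqJ]; omega)
      rw [← neg_eq_zero, ← hins, neg_eq_iff_add_eq_zero, hpair q hqR J ⟨hqJ, by omega⟩]
  funext J
  exact hdown (t + 1) J (by omega)

end SubsetSums

theorem zetaVec_dotProduct (m d : ℕ) (I : Finset (Fin m × Fin m))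
    (c : {J : Finset (Fin m × Fin m) // J.card ≤ d} → ℝ) :
    zetaVec m d I ⬝ᵥ c = ∑ J ∈ I.powerset, if h : J.card ≤ d then c ⟨J, h⟩ else 0 := by
  set f : Finset (Fin m × Fin m) → ℝ := fun J => if h : J.card ≤ d then c ⟨J, h⟩ else 0
  calc zetaVec m d I ⬝ᵥ c
      = ∑ J : {J : Finset (Fin m × Fin m) // J.card ≤ d}, if ↑J ⊆ I then f J else 0 := by
        refine sum_congr rfl fun J _ => ?_
        simp only [zetaVec, f, dif_pos J.2, ite_mul, one_mul, zero_mul]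
    _ = ∑ J with J.card ≤ d, if J ⊆ I then f J else 0 :=
        by rw [← sum_subtype_eq_sum_filter, subtype_univ]
    _ = ∑ J, if J ⊆ I then f J else 0 :=
        sum_filter_of_ne fun J _ hJ => by by_contra hd; simp [f, hd] at hJ
    _ = ∑ J ∈ I.powerset, f J := by
        rw [← sum_filter]
        congr 1
        ext J
        simp

theorem eq_zero_of_zetaVec_dotProduct_eq_zero {m t : ℕ} (htm : t < m) (l : Fin m)
    (c : {J : Finset (Fin m × Fin m) // J.card ≤ t} → ℝ)
    (h : ∀ I : Finset (Fin m × Fin m), I.card ≤ t + 1 → (∃ p ∈ I, p.1 = l) →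
      zetaVec m t I ⬝ᵥ c = 0) :
    c = 0 := by
  have hf := eq_zero_of_sum_powerset_eq_zero_of_meets ({l} ×ˢ univ) (by simpa using htm)
    (fun J => if h : J.card ≤ t then c ⟨J, h⟩ else 0) (fun J hJ => dif_neg (by omega))
    fun I hI ⟨p, hpI, hpl⟩ => by
      rw [← zetaVec_dotProduct]
      exact h I hI ⟨p, hpI, mem_singleton.mp (mem_product.mp hpl).1⟩
  funext J
  simpa [J.2] using congrFun hf J

theorem exists_sum_sq_zetaVec_dotProduct_le {m t : ℕ} (htm : t < m) (l : Fin m) :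
    ∃ C, 0 ≤ C ∧ ∀ c, ∑ I, (zetaVec m t I ⬝ᵥ c) ^ 2 ≤
      C * ∑ I with I.card ≤ t + 1 ∧ ∃ p ∈ I, p.1 = l, (zetaVec m t I ⬝ᵥ c) ^ 2 :=
  exists_sum_sq_le_mul_sum_sq (fun I => dotProductBilin ℝ ℝ (zetaVec m t I)) _ univ
    fun c hc => eq_zero_of_zetaVec_dotProduct_eq_zero htm l c fun I hI hIl =>
      hc I (mem_filter.mpr ⟨mem_univ I, hI, hIl⟩)

theorem sum_mul_nonneg_of_sum_le {ι : Type*} [Fintype ι] (s : Finset ι) {w x : ι → ℝ}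
    {a b C : ℝ} (hx : ∀ i, 0 ≤ x i) (hb : 0 ≤ b) (hw : ∀ i, -b ≤ w i)
    (hws : ∀ i ∈ s, a - b ≤ w i) (hC : ∑ i, x i ≤ C * ∑ i ∈ s, x i) (hbC : b * C ≤ a) :
    0 ≤ ∑ i, w i * x i := by
  have hs : 0 ≤ ∑ i ∈ s, x i := sum_nonneg fun i _ => hx i
  have hshift : a * ∑ i ∈ s, x i ≤ ∑ i, (w i + b) * x i :=
    calc a * ∑ i ∈ s, x i ≤ ∑ i ∈ s, (w i + b) * x i := by
          rw [mul_sum]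
          exact sum_le_sum fun i hi => mul_le_mul_of_nonneg_right (by linarith [hws i hi]) (hx i)
      _ ≤ ∑ i, (w i + b) * x i := sum_le_sum_of_subset_of_nonneg (subset_univ s)
          fun i _ _ => mul_nonneg (by linarith [hw i]) (hx i)
  have hsplit : ∑ i, (w i + b) * x i = ∑ i, w i * x i + b * ∑ i, x i := by
    rw [mul_sum, ← sum_add_distrib]
    exact sum_congr rfl fun i _ => by ring
  have hbad : b * ∑ i, x i ≤ a * ∑ i ∈ s, x i :=
    calc b * ∑ i, x i ≤ b * (C * ∑ i ∈ s, x i) := mul_le_mul_of_nonneg_left hC hb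
      _ = (b * C) * ∑ i ∈ s, x i := by ring
      _ ≤ a * ∑ i ∈ s, x i := mul_le_mul_of_nonneg_right hbC hs
  linarith

section Demand

variable {P : ℝ}

theorem schedDemand_nonneg (hP : 0 ≤ P) (l : ℕ) : 0 ≤ schedDemand P l :=
  sum_nonneg fun j _ => pow_nonneg hP j

theorem schedDemand_le (hP : 1 ≤ P) (l : ℕ) : schedDemand P l ≤ (l + 1) * P ^ l := by
  have := sum_le_card_nsmul (range (l + 1)) (P ^ ·) (P ^ l) fun j hj =>
    pow_le_pow_right₀ hP (Nat.lt_succ_iff.mp (mem_range.mp hj))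
  simpa [schedDemand] using this

theorem schedDemand_mul_le_pow {m : ℕ} {l : Fin m} {C : ℝ} (hC : 0 ≤ C) (hP : (m : ℝ) * C ≤ P)
    (hP1 : 1 ≤ P) : schedDemand P l * C ≤ P ^ (l.1 + 1) := by
  have hlm : ((l.1 + 1 : ℕ) : ℝ) ≤ m := by exact_mod_cast l.2
  calc schedDemand P l * C ≤ ((l.1 + 1) * P ^ l.1) * C :=
        mul_le_mul_of_nonneg_right (schedDemand_le hP1 l) hC
    _ = ((l.1 + 1 : ℕ) * C) * P ^ l.1 := by push_cast; ring
    _ ≤ (m * C) * P ^ l.1 := mul_le_mul_of_nonneg_right (mul_le_mul_of_nonneg_right hlm hC)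
        (pow_nonneg (zero_le_one.trans hP1) l.1)
    _ ≤ P ^ (l.1 + 1) := by
        rw [pow_succ']
        exact mul_le_mul_of_nonneg_right hP (pow_nonneg (zero_le_one.trans hP1) l.1)

variable {m : ℕ} (l : Fin m) (I : Finset (Fin m × Fin m))

theorem neg_schedDemand_le_schedG (hP : 0 ≤ P) : -schedDemand P l ≤ schedG m P l I := by
  have : 0 ≤ ∑ p ∈ I with p.1 ≤ l, P ^ (p.1.1 + 1) := sum_nonneg fun p _ => pow_nonneg hP _
  rw [schedG]
  linarith

theorem pow_sub_schedDemand_le_schedG (hP : 0 ≤ P) (hI : ∃ p ∈ I, p.1 = l) :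
    P ^ (l.1 + 1) - schedDemand P l ≤ schedG m P l I := by
  obtain ⟨p, hpI, hpl⟩ := hI
  have := single_le_sum (s := I.filter (fun q => q.1 ≤ l))
    (f := fun q : Fin m × Fin m => P ^ (q.1.1 + 1))
    (fun q _ => pow_nonneg hP _) (mem_filter.mpr ⟨hpI, hpl.le⟩)
  rw [hpl] at this
  rw [schedG]
  linarith

end Demand

theorem exists_posSemidef_schedG {m t : ℕ} (htm : t < m) :
    ∃ P0 : ℝ, 1 < P0 ∧ ∀ P, P0 ≤ P → ∀ (l : Fin m) {α : ℝ}, 0 ≤ α →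
      (∑ I, (schedG m P l I * if I.card ≤ t + 1 then α else 0) •
        vecMulVec (zetaVec m t I) (zetaVec m t I)).PosSemidef := by
  choose C hC0 hC using exists_sum_sq_zetaVec_dotProduct_le htm
  have hmC : 0 ≤ (m : ℝ) * ∑ l, C l :=
    mul_nonneg (Nat.cast_nonneg m) (sum_nonneg fun l _ => hC0 l)
  refine ⟨2 + m * ∑ l, C l, by linarith, fun P hP l α hα => ?_⟩
  have hP0 : 0 ≤ P := by linarith
  have hD := schedDemand_nonneg hP0 l
  refine posSemidef_sum_smul_vecMulVec_self _ _ fun c => ?_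
  refine sum_mul_nonneg_of_sum_le _ (a := P ^ (l.1 + 1) * α) (b := schedDemand P l * α)
    (fun I => sq_nonneg _) (mul_nonneg hD hα) (fun I => ?_) (fun I hI => ?_) (hC l c) ?_
  · split_ifs
    · rw [neg_mul_eq_neg_mul]
      exact mul_le_mul_of_nonneg_right (neg_schedDemand_le_schedG l I hP0) hα
    · simpa using mul_nonneg hD hα
  · obtain ⟨-, hIt, hIl⟩ := mem_filter.mp hI
    rw [if_pos hIt, ← sub_mul]
    exact mul_le_mul_of_nonneg_right (pow_sub_schedDemand_le_schedG l I hP0 hIl) hα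
  · rw [mul_right_comm]
    refine mul_le_mul_of_nonneg_right (schedDemand_mul_le_pow (hC0 l) ?_ (by linarith)) hα
    have := single_le_sum (fun l _ => hC0 l) (mem_univ l)
    linarith [mul_le_mul_of_nonneg_left this (Nat.cast_nonneg (α := ℝ) m)]

theorem stmt_1 (k t m : ℕ) (hk : 1 ≤ k) (hm : m = k * (t + 1)) :
    ∃ P0 : ℝ, 1 < P0 ∧ ∀ P : ℝ, P0 ≤ P →
      let T : ℝ := ((t + 1 : ℕ) : ℝ)
      let α : ℝ := ((Fintype.card {J : Finset (Fin m × Fin m) // J.card ≤ t + 1} : ℝ))⁻¹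
      let y : Finset (Fin m × Fin m) → ℝ := fun I => if I.card ≤ t + 1 then α else 0
      (∑ I : Finset (Fin m × Fin m), y I = 1) ∧
      Matrix.PosSemidef
        (∑ I : Finset (Fin m × Fin m),
          y I • Matrix.vecMulVec (zetaVec m (t + 1) I) (zetaVec m (t + 1) I)) ∧
      Matrix.PosSemidef
        (∑ I : Finset (Fin m × Fin m),
          (schedG0 m T I * y I) • Matrix.vecMulVec (zetaVec m t I) (zetaVec m t I)) ∧
      ∀ l : Fin m, Matrix.PosSemidef
        (∑ I : Finset (Fin m × Fin m),
          (schedG m P l I * y I) • Matrix.vecMulVec (zetaVec m t I) (zetaVec m t I)) := by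
  have htm : t < m := by rw [hm]; nlinarith
  obtain ⟨P0, hP0, hdemand⟩ := exists_posSemidef_schedG htm
  refine ⟨P0, hP0, fun P hP => ?_⟩
  intro T α y
  have hα : 0 ≤ α := by positivity
  have hy : ∀ I, 0 ≤ y I := fun I => by
    dsimp only [y]
    split_ifs
    exacts [hα, le_rfl]
  have hg0 : ∀ I, 0 ≤ schedG0 m T I * y I := fun I => by
    dsimp only [y]
    split_ifs with hI
    · exact mul_nonneg (sub_nonneg.mpr (show (I.card : ℝ) ≤ (t + 1 : ℕ) by exact_mod_cast hI)) hα
    · simp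
  refine ⟨?_, posSemidef_sum_smul_vecMulVec_self _ _ fun c => ?_,
    posSemidef_sum_smul_vecMulVec_self _ _ fun c => ?_, fun l => hdemand P hP l hα⟩
  · have : 0 < Fintype.card {J : Finset (Fin m × Fin m) // J.card ≤ t + 1} :=
      Fintype.card_pos_iff.mpr ⟨⟨∅, by simp⟩⟩
    rw [← sum_filter, sum_const, nsmul_eq_mul, ← Fintype.card_subtype]
    exact mul_inv_cancel₀ (by positivity)
  · exact sum_nonneg fun I _ => mul_nonneg (hy I) (sq_nonneg _)
  · exact sum_nonneg fun I _ => mul_nonneg (hg0 I) (sq_nonneg _)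
end

section
/- Let n and k be integers with 1 ≤ k ≤ n, and let f : {0,1}^n → ℝ be defined by f(x) = ∑_{K ⊆ [n], |K| = k} ∑_{∅ ≠ J ⊆ K} (−1)^{|J|+1} ∏_{j∈J} x_j. Then there exist reals (y_I)_{I ⊆ [n]} such that: (i) ∑_{I ⊆ [n]} y_I = 1; (ii) the P_{k−1}(n) × P_{k−1}(n) matrix ∑_{I ⊆ [n]} y_I Z_I Z_Iᵀ is positive semidefinite, where Z_I are (k−1)-zeta vectors; and (iii) ∑_{I ⊆ [n]} f(x_I) y_I > C(n,k), where x_I ∈ {0,1}^n is the indicator vector of I and C(n,k) = max_{x ∈ {0,1}^n} f(x). Hence the level-(k−1) Lasserre relaxation does not solve the unconstrained maximization of the degree-k 0/1 polynomial f exactly. -/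
open Finset Matrix

noncomputable def zeta (n d : ℕ) (I : Finset (Fin n)) :
    {J : Finset (Fin n) // J.card ≤ d} → ℝ :=
  fun J => if (J : Finset (Fin n)) ⊆ I then 1 else 0

noncomputable def fPoly (n k : ℕ) (x : Fin n → ℝ) : ℝ :=
  ∑ K ∈ Finset.powersetCard k (Finset.univ : Finset (Fin n)),
    ∑ J ∈ K.powerset.filter (fun J => J ≠ ∅), (-1 : ℝ) ^ (J.card + 1) * ∏ j ∈ J, x j

noncomputable def indVec (n : ℕ) (I : Finset (Fin n)) : Fin n → ℝ :=
  fun i => if i ∈ I then 1 else 0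

/-!
The witness is a signed measure: mass `(1 + ε) / N` on each of the `N` sets `I` with
`#Iᶜ ≤ k - 1`, and mass `-ε` on `∅`. Every such `I` meets every `k`-set, so `f(x_I) = C(n, k)`,
while `f(x_∅) = 0`; the objective value is `(1 + ε) C(n, k)`. The moment matrix stays positive
semidefinite for small `ε` because, by inclusion–exclusion, `Z_∅` is a linear combination of the
`Z_I` with `#Iᶜ ≤ k - 1`, so Cauchy–Schwarz bounds `ε ⟪Z_∅, x⟫²` by `(1 / N) ∑ ⟪Z_I, x⟫²`.
-/

theorem sum_powerset_neg_one_pow_card_real {α : Type*} [DecidableEq α] (s : Finset α) :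
    ∑ t ∈ s.powerset, (-1 : ℝ) ^ #t = if s = ∅ then 1 else 0 := by
  exact_mod_cast congrArg (Int.cast : ℤ → ℝ) (sum_powerset_neg_one_pow_card (x := s))

section EmptySetInSpan

variable {α : Type*} [Fintype α] [DecidableEq α]

/-- The coefficients of `[J = ∅]` in the basis `J ↦ [Disjoint J A]`, `#A ≤ d`, of functions on
sets of size at most `d`, obtained by Möbius inversion. -/
noncomputable def emptyCoeff (d : ℕ) (A : Finset α) : ℝ :=
  (-1) ^ #A * ∑ C with A ⊆ C ∧ #C ≤ d, (-1) ^ #C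

theorem sum_emptyCoeff_disjoint {d : ℕ} {J : Finset α} (hJ : #J ≤ d) :
    ∑ A with #A ≤ d ∧ Disjoint J A, emptyCoeff d A = if J = ∅ then 1 else 0 := by
  calc ∑ A with #A ≤ d ∧ Disjoint J A, emptyCoeff d A
      = ∑ A with #A ≤ d ∧ Disjoint J A, ∑ C with A ⊆ C ∧ #C ≤ d, (-1 : ℝ) ^ #A * (-1) ^ #C := by
        simp only [emptyCoeff, mul_sum]
    _ = ∑ C with #C ≤ d, ∑ A ∈ (C \ J).powerset, (-1 : ℝ) ^ #A * (-1) ^ #C := by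
        refine sum_comm' fun A C => ?_
        simp only [mem_filter, mem_univ, true_and, mem_powerset, subset_sdiff]
        constructor
        · rintro ⟨⟨-, hJA⟩, hAC, hC⟩
          exact ⟨⟨hAC, hJA.symm⟩, hC⟩
        · rintro ⟨⟨hAC, hAJ⟩, hC⟩
          exact ⟨⟨(card_le_card hAC).trans hC, hAJ.symm⟩, hAC, hC⟩
    _ = ∑ C with #C ≤ d, if C ⊆ J then (-1 : ℝ) ^ #C else 0 := by
        simp only [← sum_mul, sum_powerset_neg_one_pow_card_real, sdiff_eq_empty_iff_subset,
          ite_mul, one_mul, zero_mul]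
    _ = ∑ C ∈ J.powerset, (-1 : ℝ) ^ #C := by
        rw [sum_ite, sum_const_zero, add_zero, filter_filter]
        congr 1
        ext C
        simp only [mem_filter, mem_univ, true_and, mem_powerset, and_iff_right_iff_imp]
        exact fun hCJ => (card_le_card hCJ).trans hJ
    _ = if J = ∅ then 1 else 0 := sum_powerset_neg_one_pow_card_real J

end EmptySetInSpan

theorem zeta_empty_eq_sum (n d : ℕ) :
    zeta n d ∅ = ∑ I with #Iᶜ ≤ d, emptyCoeff d Iᶜ • zeta n d I := by
  ext J
  have hreindex : ∑ I with #Iᶜ ≤ d ∧ (J : Finset (Fin n)) ⊆ I, emptyCoeff d Iᶜ =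
      ∑ A with #A ≤ d ∧ Disjoint (J : Finset (Fin n)) A, emptyCoeff d A :=
    sum_nbij' (·ᶜ) (·ᶜ) (by simp [← subset_compl_iff_disjoint_right])
      (by simp [← subset_compl_iff_disjoint_right]) (by simp) (by simp) (by simp)
  simp only [zeta, subset_empty, Finset.sum_apply, Pi.smul_apply, smul_eq_mul, mul_ite, mul_one,
    mul_zero]
  rw [sum_ite, sum_const_zero, add_zero, filter_filter, hreindex, sum_emptyCoeff_disjoint J.2]

section PerturbedUniform

variable {ι m : Type*} [Fintype ι] [Fintype m]

theorem posSemidef_sum_smul_vecMulVec_self_s2 {y : ι → ℝ} {z : ι → m → ℝ}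
    (h : ∀ x, 0 ≤ ∑ i, y i * (z i ⬝ᵥ x) ^ 2) :
    PosSemidef (∑ i, y i • vecMulVec (z i) (z i)) := by
  refine .of_dotProduct_mulVec_nonneg ?_ fun x => ?_
  · refine IsHermitian.ext fun a b => ?_
    simp [Matrix.sum_apply, vecMulVec_apply, mul_comm]
  · simpa [sum_mulVec, smul_mulVec, vecMulVec_mulVec, sum_dotProduct, smul_dotProduct,
      dotProduct_comm x, sq, mul_assoc] using h x

variable [DecidableEq ι]

noncomputable def perturbedUniform (S : Finset ι) (i₀ : ι) (ε : ℝ) (i : ι) : ℝ :=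
  (1 + ε) / #S * (if i ∈ S then 1 else 0) - ε * (if i = i₀ then 1 else 0)

variable {S : Finset ι} {i₀ : ι} {ε : ℝ}

theorem sum_perturbedUniform_mul (g : ι → ℝ) :
    ∑ i, perturbedUniform S i₀ ε i * g i = (1 + ε) / #S * ∑ i ∈ S, g i - ε * g i₀ := by
  simp [perturbedUniform, sub_mul, sum_sub_distrib, mul_sum, ite_mul]

theorem sum_perturbedUniform (hS : S.Nonempty) : ∑ i, perturbedUniform S i₀ ε i = 1 := by
  have hS' : (#S : ℝ) ≠ 0 := by exact_mod_cast hS.card_pos.ne'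
  simpa [field] using sum_perturbedUniform_mul (S := S) (i₀ := i₀) (ε := ε) (fun _ => 1)

theorem posSemidef_sum_perturbedUniform_smul_vecMulVec {z : ι → m → ℝ} (c : ι → ℝ)
    (hc : z i₀ = ∑ i ∈ S, c i • z i) (hε : 0 ≤ ε) (hεc : ε * (#S * ∑ i ∈ S, c i ^ 2) ≤ 1) :
    PosSemidef (∑ i, perturbedUniform S i₀ ε i • vecMulVec (z i) (z i)) := by
  refine posSemidef_sum_smul_vecMulVec_self_s2 fun x => ?_
  rw [sum_perturbedUniform_mul]
  set T := ∑ i ∈ S, (z i ⬝ᵥ x) ^ 2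
  have hT : 0 ≤ T := sum_nonneg fun i _ => sq_nonneg _
  have hcs : (z i₀ ⬝ᵥ x) ^ 2 ≤ (∑ i ∈ S, c i ^ 2) * T := by
    rw [hc, sum_dotProduct]
    simpa [smul_dotProduct] using sum_mul_sq_le_sq_mul_sq S c (fun i => z i ⬝ᵥ x)
  have hscale : ε * (∑ i ∈ S, c i ^ 2) * T ≤ (1 + ε) / #S * T := by
    rcases (Nat.cast_nonneg (α := ℝ) #S).eq_or_lt with hN | hN
    · simp [card_eq_zero.1 (by exact_mod_cast hN.symm)]
    · rw [div_mul_eq_mul_div, le_div_iff₀ hN]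
      nlinarith [mul_le_mul_of_nonneg_left hεc hT, mul_nonneg hε hT]
  nlinarith [mul_le_mul_of_nonneg_left hcs hε]

end PerturbedUniform

theorem sum_powerset_filter_ne_empty_neg_one_pow_mul_prod {ι R : Type*} [DecidableEq ι]
    [CommRing R] (s : Finset ι) (x : ι → R) :
    ∑ t ∈ s.powerset.filter (fun t => t ≠ ∅), (-1 : R) ^ (#t + 1) * ∏ i ∈ t, x i =
      1 - ∏ i ∈ s, (1 - x i) := by
  have hexpand : ∏ i ∈ s, (1 - x i) = ∑ t ∈ s.powerset, (-1 : R) ^ #t * ∏ i ∈ t, x i := by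
    simp_rw [sub_eq_add_neg, prod_one_add, prod_neg]
  rw [hexpand, filter_ne', sum_erase_eq_sub (empty_mem_powerset s)]
  simp only [pow_succ, mul_neg_one, neg_mul, sum_neg_distrib, card_empty, pow_zero, prod_empty]
  ring

theorem fPoly_eq_sum_one_sub_prod (n k : ℕ) (x : Fin n → ℝ) :
    fPoly n k x = ∑ K ∈ powersetCard k univ, (1 - ∏ i ∈ K, (1 - x i)) := by
  simp only [fPoly, sum_powerset_filter_ne_empty_neg_one_pow_mul_prod]

theorem fPoly_indVec (n k : ℕ) (I : Finset (Fin n)) :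
    fPoly n k (indVec n I) = #{K ∈ powersetCard k univ | ¬Disjoint K I} := by
  have hprod : ∀ K : Finset (Fin n),
      ∏ i ∈ K, (1 - indVec n I i) = if Disjoint K I then 1 else 0 := by
    intro K
    split_ifs with h
    · exact prod_eq_one fun i hi => by simp [indVec, disjoint_left.1 h hi]
    · obtain ⟨i, hiK, hiI⟩ := not_disjoint_iff.1 h
      exact prod_eq_zero hiK (by simp [indVec, hiI])
  rw [fPoly_eq_sum_one_sub_prod, natCast_card_filter]
  refine sum_congr rfl fun K _ => ?_
  by_cases h : Disjoint K I <;> simp [hprod, h]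

theorem indVec_filter_eq_one {n : ℕ} {x : Fin n → ℝ} (hx : ∀ i, x i = 0 ∨ x i = 1) :
    indVec n {i | x i = 1} = x := by
  ext i
  rcases hx i with h | h <;> simp [indVec, h]

theorem fPoly_le_choose {n k : ℕ} {x : Fin n → ℝ} (hx : ∀ i, x i = 0 ∨ x i = 1) :
    fPoly n k x ≤ n.choose k := by
  rw [← indVec_filter_eq_one hx, fPoly_indVec]
  exact_mod_cast (card_filter_le _ _).trans_eq (by simp)

theorem fPoly_indVec_of_card_compl_lt {n k : ℕ} {I : Finset (Fin n)} (hI : #Iᶜ < k) :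
    fPoly n k (indVec n I) = n.choose k := by
  rw [fPoly_indVec, filter_true_of_mem, card_powersetCard, card_univ, Fintype.card_fin]
  intro K hK hKI
  have := card_le_card (subset_compl_iff_disjoint_right.2 hKI)
  rw [(mem_powersetCard.1 hK).2] at this
  omega

theorem fPoly_indVec_empty (n k : ℕ) : fPoly n k (indVec n ∅) = 0 := by
  simp [fPoly_indVec]

theorem choose_lt_sum_fPoly_mul_perturbedUniform {n k : ℕ} (hk : 1 ≤ k) (hkn : k ≤ n) {ε : ℝ}
    (hε : 0 < ε) :
    (n.choose k : ℝ) <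
      ∑ I, fPoly n k (indVec n I) * perturbedUniform {I | #Iᶜ ≤ k - 1} ∅ ε I := by
  have hN : (0 : ℝ) < #{I : Finset (Fin n) | #Iᶜ ≤ k - 1} := by
    exact_mod_cast card_pos.2 ⟨univ, by simp⟩
  have hC : (1 : ℝ) ≤ n.choose k := by exact_mod_cast Nat.choose_pos hkn
  simp_rw [mul_comm (fPoly n k _)]
  rw [sum_perturbedUniform_mul, fPoly_indVec_empty,
    sum_congr rfl fun I hI => fPoly_indVec_of_card_compl_lt (by simp at hI; omega),
    sum_const, nsmul_eq_mul, mul_zero, sub_zero, div_mul_comm, mul_div_cancel_left₀ _ hN.ne']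
  nlinarith

theorem stmt_2 (n k : ℕ) (hk : 1 ≤ k) (hkn : k ≤ n) :
    ∃ y : Finset (Fin n) → ℝ,
      (∑ I : Finset (Fin n), y I = 1) ∧
      Matrix.PosSemidef
        (∑ I : Finset (Fin n),
          y I • Matrix.vecMulVec (zeta n (k - 1) I) (zeta n (k - 1) I)) ∧
      (∀ x : Fin n → ℝ, (∀ i, x i = 0 ∨ x i = 1) → fPoly n k x ≤ (n.choose k : ℝ)) ∧
      (∃ x : Fin n → ℝ, (∀ i, x i = 0 ∨ x i = 1) ∧ fPoly n k x = (n.choose k : ℝ)) ∧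
      ((n.choose k : ℝ) < ∑ I : Finset (Fin n), fPoly n k (indVec n I) * y I) := by
  set S : Finset (Finset (Fin n)) := {I | #Iᶜ ≤ k - 1}
  set B := ∑ I ∈ S, emptyCoeff (k - 1) Iᶜ ^ 2
  set ε : ℝ := (#S * B + 1)⁻¹
  have hε : 0 < ε := by positivity
  have hεB : ε * (#S * B) ≤ 1 := by
    rw [inv_mul_le_iff₀ (by positivity)]
    linarith
  refine ⟨perturbedUniform S ∅ ε, sum_perturbedUniform ⟨univ, by simp [S]⟩,
    posSemidef_sum_perturbedUniform_smul_vecMulVec _ (zeta_empty_eq_sum n (k - 1)) hε.le hεB,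
    fun x hx => fPoly_le_choose hx,
    ⟨indVec n univ, fun i => by simp [indVec], fPoly_indVec_of_card_compl_lt (by simpa)⟩,
    choose_lt_sum_fPoly_mul_perturbedUniform hk hkn hε⟩
end

section
/- Let k ≥ 2 and s ≥ 1 be integers, let m = ks and n = m², and consider the scheduling instance with budget T = s = √n/k. Then there exists a real P₀ > 1 such that for every real P ≥ P₀ the level-s Lasserre relaxation of LP(s) is infeasible: there are no reals (y_I)_{I ⊆ [m]×[m]} satisfying (i) ∑_I y_I = 1; (ii) ∑_I y_I Z_I Z_Iᵀ positive semidefinite with (s+1)-zeta vectors; and (iii) ∑_I g_0(x_I) y_I Z_I Z_Iᵀ positive semidefinite and ∑_I g_ℓ(x_I) y_I Z_I Z_Iᵀ positive semidefinite for every ℓ ∈ [m], with s-zeta vectors, where x_I is the 0/1 indicator vector of I. -/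
open Finset Matrix

/-! Only diagonal entries of the three matrices matter. Write `y_S = ∑_{I ⊇ S} y_I`. The moment
matrix gives `y_S ≥ 0` for `|S| ≤ s + 1`, and the cardinality localizer at `|J| = s` gives
`-∑_{p ∉ J} y_{J ∪ {p}} ≥ 0`, so `y_S = 0` whenever `|S| = s + 1`. A set `S₀` of maximal size
with `y_{S₀} > 0` thus has `|S₀| ≤ s` and `y_{S₀ ∪ {p}} = 0` for all `p ∉ S₀`; since each `g_ℓ` is
affine in the indicator vector, the `ℓ`-th localizer at `S₀` reads `g_ℓ(S₀) y_{S₀} ≥ 0`, so `S₀` is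
an integral solution of `LP(s)`. For `P ≥ 1`, however, every integral solution puts at least
`ℓ + 1` jobs into the first `ℓ + 1` blocks, hence uses `m = k s > s` jobs. -/

section PseudoMoment

variable {α : Type*} [Fintype α] [DecidableEq α]

def pseudoMoment (y : Finset α → ℝ) (S : Finset α) : ℝ := ∑ I, if S ⊆ I then y I else 0

lemma pseudoMoment_empty (y : Finset α → ℝ) : pseudoMoment y ∅ = ∑ I, y I := by
  simp [pseudoMoment]

lemma pseudoMoment_sum_mul (y : Finset α → ℝ) (f : α → ℝ) (J : Finset α) :
    pseudoMoment (fun I => (∑ p ∈ I, f p) * y I) J = ∑ p, f p * pseudoMoment y (insert p J) := by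
  simp only [pseudoMoment, mul_sum, mul_ite, mul_zero]
  rw [sum_comm]
  refine sum_congr rfl fun I _ => ?_
  by_cases hJ : J ⊆ I
  · simp [insert_subset_iff, hJ, sum_mul]
  · have hins : ∀ p, ¬ insert p J ⊆ I := fun p h => hJ ((subset_insert p J).trans h)
    simp [hJ, hins]

lemma sum_mul_pseudoMoment_insert (y : Finset α → ℝ) (f : α → ℝ) (J : Finset α) :
    ∑ p, f p * pseudoMoment y (insert p J)
      = (∑ p ∈ J, f p) * pseudoMoment y J + ∑ p ∈ Jᶜ, f p * pseudoMoment y (insert p J) := by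
  rw [← sum_add_sum_compl J, sum_mul]
  congr 1
  exact sum_congr rfl fun p hp => by rw [insert_eq_of_mem hp]

lemma pseudoMoment_sub (y z : Finset α → ℝ) (J : Finset α) :
    pseudoMoment (fun I => y I - z I) J = pseudoMoment y J - pseudoMoment z J := by
  simp only [pseudoMoment, ← sum_sub_distrib, ite_sub_ite, sub_zero]

lemma pseudoMoment_const_mul (c : ℝ) (y : Finset α → ℝ) (J : Finset α) :
    pseudoMoment (fun I => c * y I) J = c * pseudoMoment y J := by
  simp only [pseudoMoment, mul_sum, mul_ite, mul_zero]

lemma pseudoMoment_card_sub_mul (y : Finset α → ℝ) (J : Finset α) :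
    pseudoMoment (fun I => ((#J : ℝ) - #I) * y I) J
      = -∑ p ∈ Jᶜ, pseudoMoment y (insert p J) := by
  have hcard := pseudoMoment_sum_mul y (fun _ => 1) J
  rw [sum_mul_pseudoMoment_insert] at hcard
  simp only [sum_const, nsmul_eq_mul, mul_one, one_mul] at hcard
  simp only [sub_mul, pseudoMoment_sub, pseudoMoment_const_mul, hcard]
  ring

lemma pseudoMoment_insert_eq_zero {y : Finset α → ℝ} {J : Finset α}
    (hnn : ∀ p ∉ J, 0 ≤ pseudoMoment y (insert p J))
    (h : 0 ≤ pseudoMoment (fun I => ((#J : ℝ) - #I) * y I) J) :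
    ∀ p ∉ J, pseudoMoment y (insert p J) = 0 := by
  rw [pseudoMoment_card_sub_mul, neg_nonneg] at h
  intro p hp
  exact (sum_eq_zero_iff_of_nonneg fun q hq => hnn q (mem_compl.1 hq)).1
    (le_antisymm h (sum_nonneg fun q hq => hnn q (mem_compl.1 hq))) p (mem_compl.2 hp)

lemma pseudoMoment_affine_mul {y : Finset α → ℝ} {S : Finset α}
    (h : ∀ p ∉ S, pseudoMoment y (insert p S) = 0) (f : α → ℝ) (c : ℝ) :
    pseudoMoment (fun I => ((∑ p ∈ I, f p) - c) * y I) S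
      = ((∑ p ∈ S, f p) - c) * pseudoMoment y S := by
  have hout : ∑ p ∈ Sᶜ, f p * pseudoMoment y (insert p S) = 0 :=
    sum_eq_zero fun p hp => by rw [h p (mem_compl.1 hp), mul_zero]
  simp only [sub_mul, pseudoMoment_sub, pseudoMoment_const_mul, pseudoMoment_sum_mul,
    sum_mul_pseudoMoment_insert, hout, add_zero]

lemma exists_pseudoMoment_pos_insert_eq_zero (Y : Finset α → ℝ) (s : ℕ) (hY : 0 < Y ∅)
    (hnn : ∀ J : Finset α, #J ≤ s + 1 → 0 ≤ Y J) (htop : ∀ J : Finset α, #J = s + 1 → Y J = 0) :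
    ∃ S : Finset α, #S ≤ s ∧ 0 < Y S ∧ ∀ p ∉ S, Y (insert p S) = 0 := by
  obtain ⟨S, hS, hmax⟩ := exists_max_image {S : Finset α | #S ≤ s + 1 ∧ 0 < Y S} card
    ⟨∅, by simp [hY]⟩
  obtain ⟨hSle, hSpos⟩ := (mem_filter.1 hS).2
  have hSs : #S ≤ s := by
    by_contra! h
    exact hSpos.ne' (htop S (by omega))
  refine ⟨S, hSs, hSpos, fun p hp => ?_⟩
  have hcard : #(insert p S) = #S + 1 := card_insert_of_notMem hp
  refine le_antisymm (not_lt.1 fun hpos => ?_) (hnn _ (by omega))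
  have := hmax _ (mem_filter.2 ⟨mem_univ _, by omega, hpos⟩)
  omega

end PseudoMoment

lemma sum_smul_vecMulVec_zetaVec_apply_self {m d : ℕ} (c : Finset (Fin m × Fin m) → ℝ)
    {J : Finset (Fin m × Fin m)} (hJ : #J ≤ d) :
    (∑ I, c I • vecMulVec (zetaVec m d I) (zetaVec m d I)) ⟨J, hJ⟩ ⟨J, hJ⟩
      = pseudoMoment c J := by
  simp only [Matrix.sum_apply, Matrix.smul_apply, vecMulVec_apply, zetaVec, smul_eq_mul,
    pseudoMoment]
  exact sum_congr rfl fun I _ => by split_ifs <;> simp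

lemma pseudoMoment_nonneg_of_posSemidef {m d : ℕ} {c : Finset (Fin m × Fin m) → ℝ}
    (h : (∑ I, c I • vecMulVec (zetaVec m d I) (zetaVec m d I)).PosSemidef)
    {J : Finset (Fin m × Fin m)} (hJ : #J ≤ d) : 0 ≤ pseudoMoment c J := by
  simpa only [sum_smul_vecMulVec_zetaVec_apply_self c hJ] using h.diag_nonneg (i := ⟨J, hJ⟩)

lemma exists_small_feasible_of_lasserre {m s : ℕ} {P : ℝ} {y : Finset (Fin m × Fin m) → ℝ}
    (hsum : ∑ I, y I = 1)
    (hM : (∑ I, y I • vecMulVec (zetaVec m (s + 1) I) (zetaVec m (s + 1) I)).PosSemidef)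
    (hG0 : (∑ I, (schedG0 m s I * y I) • vecMulVec (zetaVec m s I) (zetaVec m s I)).PosSemidef)
    (hG : ∀ l, (∑ I, (schedG m P l I * y I) •
      vecMulVec (zetaVec m s I) (zetaVec m s I)).PosSemidef) :
    ∃ S : Finset (Fin m × Fin m), #S ≤ s ∧ ∀ l, 0 ≤ schedG m P l S := by
  have hnn : ∀ J : Finset (Fin m × Fin m), #J ≤ s + 1 → 0 ≤ pseudoMoment y J :=
    fun J hJ => pseudoMoment_nonneg_of_posSemidef hM hJ
  have htop : ∀ S : Finset (Fin m × Fin m), #S = s + 1 → pseudoMoment y S = 0 := by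
    intro S hS
    obtain ⟨e, he⟩ : S.Nonempty := card_pos.1 (by omega)
    have hJ : #(S.erase e) = s := by rw [card_erase_of_mem he, hS, Nat.add_sub_cancel]
    have h0 := pseudoMoment_nonneg_of_posSemidef hG0 hJ.le
    simp only [schedG0, ← hJ] at h0
    have := pseudoMoment_insert_eq_zero
      (fun p hp => hnn _ (by rw [card_insert_of_notMem hp]; omega)) h0 e (notMem_erase e S)
    rwa [insert_erase he] at this
  obtain ⟨S, hS, hpos, hins⟩ := exists_pseudoMoment_pos_insert_eq_zero (pseudoMoment y) s
    (by rw [pseudoMoment_empty, hsum]; exact one_pos) hnn htop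
  refine ⟨S, hS, fun l => ?_⟩
  have h := pseudoMoment_nonneg_of_posSemidef (hG l) hS
  simp only [schedG, sum_filter] at h ⊢
  rw [pseudoMoment_affine_mul hins] at h
  exact nonneg_of_mul_nonneg_left h hpos

lemma sum_mul_pow_succ_add_le {P : ℝ} (hP : 1 ≤ P) (c : ℕ → ℕ) (l : ℕ)
    (h : ∀ j < l, j + 1 ≤ ∑ i ∈ range (j + 1), c i) :
    ∑ i ∈ range (l + 1), (c i : ℝ) * P ^ (i + 1) + l * P ^ (l + 1)
      ≤ (∑ i ∈ range (l + 1), c i : ℕ) * P ^ (l + 1) + ∑ j ∈ range l, P ^ (j + 1) := by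
  induction l with
  | zero => simp
  | succ l ih =>
    have hl : (l + 1 : ℝ) ≤ (∑ i ∈ range (l + 1), c i : ℕ) := by exact_mod_cast h l (by omega)
    have hpow : P ^ (l + 1) ≤ P ^ (l + 2) := pow_le_pow_right₀ hP (by omega)
    have := ih fun j hj => h j (by omega)
    rw [sum_range_succ _ (l + 1), sum_range_succ _ (l + 1), sum_range_succ (fun j => P ^ (j + 1)) l]
    push_cast at this hl ⊢
    nlinarith

lemma le_sum_count_of_demand_le {P : ℝ} (hP : 1 ≤ P) (c : ℕ → ℕ) {L : ℕ}
    (h : ∀ l < L, ∑ j ∈ range (l + 1), P ^ j ≤ ∑ i ∈ range (l + 1), (c i : ℝ) * P ^ (i + 1)) :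
    ∀ l < L, l + 1 ≤ ∑ i ∈ range (l + 1), c i := by
  intro l
  induction l using Nat.strong_induction_on with
  | _ l ih =>
    intro hl
    by_contra! hlt
    have hexcess := sum_mul_pow_succ_add_le hP c l fun j hj => ih j hj (by omega)
    have hcount : ((∑ i ∈ range (l + 1), c i : ℕ) : ℝ) ≤ l := by exact_mod_cast Nat.lt_succ_iff.1 hlt
    have hdemand := h l hl
    rw [sum_range_succ'] at hdemand
    have := mul_le_mul_of_nonneg_right hcount (by positivity : (0 : ℝ) ≤ P ^ (l + 1))
    simp only [pow_zero] at hdemand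
    linarith

lemma le_card_of_schedG_nonneg {m : ℕ} {P : ℝ} (hP : 1 ≤ P) {T : Finset (Fin m × Fin m)}
    (hT : ∀ l, 0 ≤ schedG m P l T) : m ≤ #T := by
  set c : ℕ → ℕ := fun i => #{p ∈ T | p.1.1 = i}
  have hsupply : ∀ l : Fin m, ∑ p ∈ T with p.1 ≤ l, P ^ (p.1.1 + 1)
      = ∑ i ∈ range (l + 1), (c i : ℝ) * P ^ (i + 1) := by
    intro l
    have hblocks : {p ∈ T | p.1 ≤ l} = {p ∈ T | p.1.1 ∈ range (l + 1)} :=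
      filter_congr fun p _ => by rw [mem_range, Nat.lt_succ_iff, Fin.le_def]
    rw [hblocks, ← sum_fiberwise_eq_sum_filter' T (range (l + 1)) (fun p => p.1.1) (fun i => P ^ (i + 1))]
    simp [c]
  have hcount : ∀ l, ∑ i ∈ range (l + 1), c i ≤ #T := fun l =>
    (sum_card_fiberwise_eq_card_filter T _ _).trans_le (card_filter_le _ _)
  rcases Nat.eq_zero_or_pos m with rfl | hm
  · exact Nat.zero_le _
  have := le_sum_count_of_demand_le hP c (L := m) (fun l hl => by
    simpa only [schedG, sub_nonneg, hsupply, schedDemand] using hT ⟨l, hl⟩) (m - 1) (by omega)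
  have := hcount (m - 1)
  omega

theorem stmt_3 (k s m : ℕ) (hk : 2 ≤ k) (hs : 1 ≤ s) (hm : m = k * s) :
    ∃ P0 : ℝ, 1 < P0 ∧ ∀ P : ℝ, P0 ≤ P →
      ¬ ∃ y : Finset (Fin m × Fin m) → ℝ,
        (∑ I : Finset (Fin m × Fin m), y I = 1) ∧
        Matrix.PosSemidef
          (∑ I : Finset (Fin m × Fin m),
            y I • Matrix.vecMulVec (zetaVec m (s + 1) I) (zetaVec m (s + 1) I)) ∧
        Matrix.PosSemidef
          (∑ I : Finset (Fin m × Fin m),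
            (schedG0 m ((s : ℕ) : ℝ) I * y I) • Matrix.vecMulVec (zetaVec m s I) (zetaVec m s I)) ∧
        ∀ l : Fin m, Matrix.PosSemidef
          (∑ I : Finset (Fin m × Fin m),
            (schedG m P l I * y I) • Matrix.vecMulVec (zetaVec m s I) (zetaVec m s I)) := by
  refine ⟨2, one_lt_two, fun P hP => ?_⟩
  rintro ⟨y, hsum, hM, hG0, hG⟩
  obtain ⟨S, hS, hfeas⟩ := exists_small_feasible_of_lasserre hsum hM hG0 hG
  have hmS := le_card_of_schedG_nonneg (by linarith) hfeas
  have : 2 * s ≤ m := hm ▸ Nat.mul_le_mul_right s hk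
  omega
end

section
/- Let n, d ∈ ℕ with d ≤ n and S ⊆ [n]. Then A_{d(S)} · Z_{d(S)} = Z_d. Consequently Z_{d(S)} is invertible and Z_{d(S)}^{-1} = Z_d^{-1} A_{d(S)}. -/
open Finset Matrix

/-- The matrix `Z_{d(S)}` with entries 1 if `I ⊆ J △ S` and 0 otherwise. -/
noncomputable def ZdS (n d : ℕ) (S : Finset (Fin n)) :
    Matrix {J : Finset (Fin n) // J.card ≤ d} {J : Finset (Fin n) // J.card ≤ d} ℝ :=
  Matrix.of fun I J =>
    if (I : Finset (Fin n)) ⊆ symmDiff (J : Finset (Fin n)) S then 1 else 0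

/-- The matrix `A_{d(S)}` with entries `(-1)^{|K ∩ S|}` if `I \ S ⊆ K ⊆ I` and 0 otherwise. -/
noncomputable def AdS (n d : ℕ) (S : Finset (Fin n)) :
    Matrix {J : Finset (Fin n) // J.card ≤ d} {J : Finset (Fin n) // J.card ≤ d} ℝ :=
  Matrix.of fun I K =>
    if (I : Finset (Fin n)) \ S ⊆ (K : Finset (Fin n)) ∧ (K : Finset (Fin n)) ⊆ (I : Finset (Fin n))
    then (-1 : ℝ) ^ ((K : Finset (Fin n)) ∩ S).card else 0

/-- The matrix `Z_d` with entries 1 if `I ⊆ J` and 0 otherwise. -/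
noncomputable def Zd (n d : ℕ) :
    Matrix {J : Finset (Fin n) // J.card ≤ d} {J : Finset (Fin n) // J.card ≤ d} ℝ :=
  Matrix.of fun I J => if (I : Finset (Fin n)) ⊆ (J : Finset (Fin n)) then 1 else 0

/-! The entry `(A_{d(S)} Z_{d(S)})_{I,J}` is an alternating sum over the interval
`[I \ S, I ∩ (J △ S)]` of the Boolean lattice (every `K` in it lies in `I`, hence in `P_d(n)`).
Such a sum is `1` if the interval is a single point and `0` otherwise, and
`I \ S = I ∩ (J △ S)` holds exactly when `I ⊆ J`. The same interval sum shows that the Möbius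
matrix `(-1)^{|J \ I|} [I ⊆ J]` is a left inverse of `Z_d`, so `Z_d` is invertible and
`Z_d⁻¹ A_{d(S)}` is a left inverse of `Z_{d(S)}`. -/

theorem Finset.sum_Icc_neg_one_pow_card_sdiff {α R : Type*} [DecidableEq α] [Ring R]
    (L U : Finset α) :
    ∑ K ∈ Icc L U, (-1 : R) ^ #(K \ L) = if L = U then 1 else 0 := by
  by_cases hLU : L ⊆ U
  · have hcancel : ∀ T ∈ (U \ L).powerset, (L ∪ T) \ L = T := fun T hT =>
      union_sdiff_cancel_left (disjoint_of_subset_right (mem_powerset.1 hT) disjoint_sdiff)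
    have hinj : Set.InjOn (L ∪ ·) (U \ L).powerset := fun T hT T' hT' h => by
      rw [← hcancel T hT, ← hcancel T' hT']
      exact congrArg (· \ L) h
    have hempty : U \ L = ∅ ↔ L = U :=
      sdiff_eq_empty_iff_subset.trans ⟨subset_antisymm hLU, fun h => h ▸ subset_rfl⟩
    rw [Icc_eq_image_powerset hLU, sum_image hinj, sum_congr rfl fun T hT => by rw [hcancel T hT]]
    simpa [hempty] using
      congrArg (Int.cast : ℤ → R) (sum_powerset_neg_one_pow_card (x := U \ L))
  · rw [Icc_eq_empty_iff.2 hLU, sum_empty, if_neg fun h => hLU h.le]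

theorem Finset.sum_subtype_card_le_ite_mem_Icc {α M : Type*} [Fintype α] [DecidableEq α]
    [AddCommMonoid M] {d : ℕ} {L U : Finset α} (hU : #U ≤ d) (f : Finset α → M) :
    ∑ K : {K : Finset α // #K ≤ d}, (if (K : Finset α) ∈ Icc L U then f K else 0) =
      ∑ K ∈ Icc L U, f K := by
  rw [← sum_subtype (univ.filter (#· ≤ d)) (by simp) fun K => if K ∈ Icc L U then f K else 0,
    sum_filter_of_ne, sum_ite_mem, univ_inter]
  intro K _ hK
  exact (card_le_card (mem_Icc.1 (of_not_not fun h => hK (if_neg h))).2).trans hU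

theorem Finset.sdiff_eq_inter_symmDiff_iff {α : Type*} [DecidableEq α] {I J S : Finset α} :
    I \ S = I ∩ symmDiff J S ↔ I ⊆ J := by
  simp only [Finset.ext_iff, Finset.subset_iff, mem_sdiff, mem_inter, mem_symmDiff]
  exact forall_congr' fun x => by by_cases x ∈ S <;> by_cases x ∈ J <;> simp_all

section

variable {n d : ℕ}

theorem AdS_mul_ZdS_apply (S : Finset (Fin n)) (I J : {J : Finset (Fin n) // #J ≤ d}) :
    (AdS n d S * ZdS n d S) I J =
      ∑ K ∈ Icc ((I : Finset (Fin n)) \ S) (I ∩ symmDiff (J : Finset (Fin n)) S),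
        (-1 : ℝ) ^ #(K \ (I \ S)) := by
  rw [mul_apply, ← sum_subtype_card_le_ite_mem_Icc ((card_le_card inter_subset_left).trans I.2)]
  refine sum_congr rfl fun K _ => ?_
  simp only [AdS, ZdS, of_apply, mem_Icc, subset_inter_iff]
  by_cases hK : (I : Finset (Fin n)) \ S ⊆ K ∧ (K : Finset (Fin n)) ⊆ I
  · have hsdiff : (K : Finset (Fin n)) \ (I \ S) = (K : Finset (Fin n)) ∩ S := by
      rw [sdiff_sdiff_right', sdiff_eq_empty_iff_subset.2 hK.2]
      exact empty_union _
    simp [hK, hsdiff]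
  · rw [if_neg hK, zero_mul, if_neg fun h => hK ⟨h.1, h.2.1⟩]

theorem AdS_mul_ZdS (S : Finset (Fin n)) : AdS n d S * ZdS n d S = Zd n d := by
  ext I J
  rw [AdS_mul_ZdS_apply, sum_Icc_neg_one_pow_card_sdiff]
  exact if_congr sdiff_eq_inter_symmDiff_iff rfl rfl

noncomputable def mobiusMatrix (n d : ℕ) :
    Matrix {J : Finset (Fin n) // #J ≤ d} {J : Finset (Fin n) // #J ≤ d} ℝ :=
  Matrix.of fun I J =>
    if (I : Finset (Fin n)) ⊆ J then (-1 : ℝ) ^ #((J : Finset (Fin n)) \ I) else 0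

theorem mobiusMatrix_mul_Zd : mobiusMatrix n d * Zd n d = 1 := by
  ext I J
  have hdelta :
      (1 : Matrix _ _ ℝ) I J = ∑ K ∈ Icc (I : Finset (Fin n)) J, (-1 : ℝ) ^ #(K \ I) := by
    rw [sum_Icc_neg_one_pow_card_sdiff, one_apply]
    exact if_congr Subtype.ext_iff rfl rfl
  rw [hdelta, mul_apply, ← sum_subtype_card_le_ite_mem_Icc J.2]
  refine sum_congr rfl fun K _ => ?_
  simp only [mobiusMatrix, Zd, of_apply, mem_Icc]
  rw [mul_boole, ← ite_and]
  exact if_congr and_comm rfl rfl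

theorem isUnit_det_Zd : IsUnit (Zd n d).det :=
  isUnit_det_of_left_inverse mobiusMatrix_mul_Zd

end

theorem stmt_6_general (n d : ℕ) (S : Finset (Fin n)) :
    AdS n d S * ZdS n d S = Zd n d ∧
    IsUnit (ZdS n d S) ∧
    (ZdS n d S)⁻¹ = (Zd n d)⁻¹ * AdS n d S := by
  have hleft : ((Zd n d)⁻¹ * AdS n d S) * ZdS n d S = 1 := by
    rw [mul_assoc, AdS_mul_ZdS, nonsing_inv_mul _ isUnit_det_Zd]
  exact ⟨AdS_mul_ZdS S, (isUnit_iff_isUnit_det _).2 (isUnit_det_of_left_inverse hleft),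
    inv_eq_left_inv hleft⟩

theorem stmt_6 (n d : ℕ) (hd : d ≤ n) (S : Finset (Fin n)) :
    AdS n d S * ZdS n d S = Zd n d ∧
    IsUnit (ZdS n d S) ∧
    (ZdS n d S)⁻¹ = (Zd n d)⁻¹ * AdS n d S :=
  stmt_6_general n d S
end

section
/- Let I, J, S be finite subsets of [n]. Then ∑_{K ⊆ [n], I \ S ⊆ K ⊆ I, K ⊆ J △ S} (−1)^{|K ∩ S|} equals 1 if I ⊆ J and equals 0 otherwise (here △ denotes symmetric difference). -/
open Finset

theorem stmt_7 (n : ℕ) (I J S : Finset (Fin n)) :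
    (∑ K ∈ Finset.univ.filter
        (fun K : Finset (Fin n) => I \ S ⊆ K ∧ K ⊆ I ∧ K ⊆ symmDiff J S),
      (-1 : ℝ) ^ (K ∩ S).card) = if I ⊆ J then 1 else 0 := by
  by_cases h : I \ S ⊆ J
  · have key : (∑ K ∈ Finset.univ.filter
        (fun K : Finset (Fin n) => I \ S ⊆ K ∧ K ⊆ I ∧ K ⊆ symmDiff J S),
      (-1 : ℝ) ^ (K ∩ S).card)
      = ∑ T ∈ ((I ∩ S) \ J).powerset, (-1 : ℝ) ^ T.card := by
      refine Finset.sum_bij' (fun K _ => K ∩ S) (fun T _ => (I \ S) ∪ T) ?_ ?_ ?_ ?_ ?_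
      · intro K hK
        simp only [mem_filter, mem_univ, true_and] at hK
        obtain ⟨h1, h2, h3⟩ := hK
        rw [mem_powerset]
        intro x hx
        rw [mem_inter] at hx
        have hxI := h2 hx.1
        have hxJS := h3 hx.1
        rw [Finset.mem_symmDiff] at hxJS
        simp only [mem_sdiff, mem_inter]
        rcases hxJS with ⟨hJ, hS⟩ | ⟨hS, hJ⟩
        · exact absurd hx.2 hS
        · exact ⟨⟨hxI, hx.2⟩, hJ⟩
      · intro T hT
        rw [mem_powerset] at hT
        simp only [mem_filter, mem_univ, true_and]
        refine ⟨subset_union_left, ?_, ?_⟩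
        · apply union_subset (sdiff_subset)
          intro x hx
          exact (mem_inter.1 (mem_sdiff.1 (hT hx)).1).1
        · apply union_subset
          · intro x hx
            rw [mem_sdiff] at hx
            rw [Finset.mem_symmDiff]
            exact Or.inl ⟨h (mem_sdiff.2 hx), hx.2⟩
          · intro x hx
            have := mem_sdiff.1 (hT hx)
            rw [Finset.mem_symmDiff]
            exact Or.inr ⟨(mem_inter.1 this.1).2, this.2⟩
      · intro K hK
        simp only [mem_filter, mem_univ, true_and] at hK
        obtain ⟨h1, h2, _⟩ := hK
        ext x
        simp only [mem_union, mem_sdiff, mem_inter]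
        constructor
        · rintro (⟨hI, hS⟩ | ⟨hK, hS⟩)
          · exact h1 (mem_sdiff.2 ⟨hI, hS⟩)
          · exact hK
        · intro hx
          by_cases hS : x ∈ S
          · exact Or.inr ⟨hx, hS⟩
          · exact Or.inl ⟨h2 hx, hS⟩
      · intro T hT
        rw [mem_powerset] at hT
        ext x
        simp only [mem_inter, mem_union, mem_sdiff]
        constructor
        · rintro ⟨⟨hI, hnS⟩ | hT', hS⟩
          · exact absurd hS hnS
          · exact hT'
        · intro hx
          have := mem_sdiff.1 (hT hx)
          exact ⟨Or.inr hx, (mem_inter.1 this.1).2⟩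
      · intro K hK; rfl
    rw [key]
    have cast : ∑ T ∈ ((I ∩ S) \ J).powerset, (-1 : ℝ) ^ T.card
        = ((∑ T ∈ ((I ∩ S) \ J).powerset, (-1 : ℤ) ^ T.card : ℤ) : ℝ) := by
      push_cast; rfl
    rw [cast, Finset.sum_powerset_neg_one_pow_card]
    have : ((I ∩ S) \ J = ∅) ↔ I ⊆ J := by
      rw [sdiff_eq_empty_iff_subset]
      constructor
      · intro hIS x hx
        by_cases hS : x ∈ S
        · exact hIS (mem_inter.2 ⟨hx, hS⟩)
        · exact h (mem_sdiff.2 ⟨hx, hS⟩)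
      · intro hIJ x hx
        exact hIJ (mem_inter.1 hx).1
    by_cases hc : I ⊆ J
    · rw [if_pos (this.2 hc), if_pos hc]; norm_num
    · rw [if_neg (fun he => hc (this.1 he)), if_neg hc]; norm_num
  · have hempty : Finset.univ.filter
        (fun K : Finset (Fin n) => I \ S ⊆ K ∧ K ⊆ I ∧ K ⊆ symmDiff J S) = ∅ := by
      rw [filter_eq_empty_iff]
      rintro K - ⟨h1, h2, h3⟩
      apply h
      intro x hx
      have hxK := h1 hx
      have := h3 hxK
      rw [Finset.mem_symmDiff] at this
      rcases this with ⟨hJ, _⟩ | ⟨hS, _⟩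
      · exact hJ
      · exact absurd hS (mem_sdiff.1 hx).2
    rw [hempty, sum_empty, if_neg (fun hc => h (fun x hx => hc (mem_sdiff.1 hx).1))]
end

section
/- Let n, d ∈ ℕ with d ≤ n, S ⊆ [n], and I, J ∈ P_d(n), and let B = Z_{d(S)}^{-1}. Then: (a) if I ⊄ J ∪ S, then B_{I,J} = 0; (b) if I ⊆ J ∪ S and |I ∪ J| > d, then B_{I,J} = 0; (c) if I ⊆ J ∪ S, |I ∪ J| ≤ d and S ⊆ I ∪ J, then B_{I,J} = (−1)^{|J ∩ S| + |J \ I|}; (d) if I ⊆ J ∪ S, |I ∪ J| ≤ d and S ⊄ I ∪ J, then B_{I,J} = (−1)^{|J ∩ S| + |J \ I| + d − |I ∪ J|} · C(|S \ (I ∪ J)| − 1, d − |I ∪ J|), where C(a,b) denotes the binomial coefficient (equal to 0 when b > a). -/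
open Finset Matrix

/-! Let `Λ_d p` be the sum of the coefficients of `p` of degree at most `d`. The inverse has
entries `B_{I,J} = Λ_d w_{I,J}` with
`w_{I,J} = [I ⊆ J ∪ S] (-1)^{|J ∩ S| + |J \ I|} X^{|I ∪ J|} (1 - X)^{|S \ (I ∪ J)|}`:
the binomial coefficient comes from `Λ_d (p (1 - X)) = coeff_d p`, and `X^{|I ∪ J|}` kills the
terms with `|I ∪ J| > d`.

The polynomial `w_{I,J}` is a product over the ground set of factors depending only on whether
`a` lies in `I`, `S` and `J`, so `∑_{J ⊆ K △ S} w_{I,J}` factors over the elements: summing over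
`a ∈ J` and `a ∉ J` gives `X`, `0`, `1 - X` or `1` according as `a` lies in `I ∩ K`, `I \ K`,
`K \ I` or in neither. This product has degree at most `|K| ≤ d`, so `Λ_d` evaluates it at `1`,
giving `[I = K]`. -/

open Polynomial

namespace Polynomial

variable (R : Type*) [CommRing R]

noncomputable def coeffSumUpTo (d : ℕ) : R[X] →ₗ[R] R := ∑ k ∈ range (d + 1), lcoeff R k

variable {R}

theorem coeffSumUpTo_apply (d : ℕ) (p : R[X]) :
    coeffSumUpTo R d p = ∑ k ∈ range (d + 1), p.coeff k := by
  simp [coeffSumUpTo]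

theorem coeffSumUpTo_X_pow_mul_of_lt {d u : ℕ} (h : d < u) (p : R[X]) :
    coeffSumUpTo R d (X ^ u * p) = 0 := by
  rw [coeffSumUpTo_apply]
  refine sum_eq_zero fun k hk => ?_
  rw [coeff_X_pow_mul', if_neg (by simp at hk; omega)]

theorem coeffSumUpTo_eq_eval_one {d : ℕ} {p : R[X]} (h : p.natDegree ≤ d) :
    coeffSumUpTo R d p = p.eval 1 := by
  simp [coeffSumUpTo_apply, eval_eq_sum_range' (Nat.lt_succ_of_le h)]

theorem coeffSumUpTo_mul_one_sub_X (d : ℕ) (p : R[X]) :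
    coeffSumUpTo R d (p * (1 - X)) = p.coeff d := by
  induction d with
  | zero => simp [coeffSumUpTo_apply, mul_sub]
  | succ d ih =>
    rw [coeffSumUpTo_apply, sum_range_succ, ← coeffSumUpTo_apply, ih, mul_sub, mul_one,
      coeff_sub, coeff_mul_X]
    ring

theorem coeffSumUpTo_neg_one_pow_mul (d k : ℕ) (p : R[X]) :
    coeffSumUpTo R d ((-1) ^ k * p) = (-1) ^ k * coeffSumUpTo R d p := by
  rw [show (-1 : R[X]) ^ k = C ((-1) ^ k) by simp, ← smul_eq_C_mul, map_smul, smul_eq_mul]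

theorem coeff_one_sub_X_pow (m k : ℕ) :
    ((1 - X : R[X]) ^ m).coeff k = (-1) ^ k * (m.choose k : R) := by
  have hneg : (1 - X : R[X]) ^ m = C ((-1) ^ m) * (X + C (-1)) ^ m := by
    rw [C_pow, ← mul_pow, C_neg, C_1]
    ring
  rw [hneg, coeff_C_mul, coeff_X_add_C_pow]
  rcases le_or_gt k m with hkm | hmk
  · rw [← mul_assoc, ← pow_add, show m + (m - k) = k + 2 * (m - k) by omega, pow_add, pow_mul]
    simp
  · simp [Nat.choose_eq_zero_of_lt hmk]

theorem coeffSumUpTo_X_pow_mul_one_sub_X_pow {d u : ℕ} (hu : u ≤ d) (s : ℕ) :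
    coeffSumUpTo R d (X ^ u * (1 - X) ^ s) =
      if s = 0 then 1 else (-1) ^ (d - u) * ((s - 1).choose (d - u) : R) := by
  rcases s with _ | s
  · rw [pow_zero, mul_one, coeffSumUpTo_eq_eval_one ((natDegree_X_pow_le u).trans hu)]
    simp
  · rw [pow_succ, ← mul_assoc, coeffSumUpTo_mul_one_sub_X, coeff_X_pow_mul', if_pos hu,
      coeff_one_sub_X_pow]
    simp

end Polynomial

section

variable {ι : Type*} [Fintype ι] [DecidableEq ι]

theorem Fintype.sum_prod_ite_mem {R : Type*} [CommSemiring R] (f g : ι → R) :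
    ∑ J : Finset ι, ∏ a, (if a ∈ J then f a else g a) = ∏ a, (f a + g a) := by
  rw [Fintype.prod_add]
  refine Fintype.sum_congr _ _ fun J => ?_
  rw [prod_ite]
  congr 2 <;> ext a <;> simp

theorem Fintype.prod_ite_mem_const {M : Type*} [CommMonoid M] (s : Finset ι) (c : M) :
    ∏ a, (if a ∈ s then c else 1) = c ^ #s := by
  rw [Fintype.prod_ite_mem, prod_const]

theorem Fintype.boole_subset_eq_prod {M : Type*} [CommMonoidWithZero M] (s t : Finset ι) :
    (if s ⊆ t then 1 else 0 : M) = ∏ a, if a ∈ s \ t then 0 else 1 := by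
  rw [Fintype.prod_ite_mem_const, zero_pow_eq]
  simp [sdiff_eq_empty_iff_subset]

variable {R : Type*} [CommRing R]

noncomputable def invEntryPoly (S I J : Finset ι) : R[X] :=
  if I ⊆ J ∪ S then (-1) ^ (#(J ∩ S) + #(J \ I)) * X ^ #(I ∪ J) * (1 - X) ^ #(S \ (I ∪ J))
  else 0

theorem invEntryPoly_eq_prod (S I J : Finset ι) :
    (invEntryPoly S I J : R[X]) = ∏ a, if a ∈ J then (if a ∈ S ↔ a ∈ I then -X else X)
      else if a ∈ I then (if a ∈ S then X else 0) else (if a ∈ S then 1 - X else 1) := by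
  have hfactor : ∀ a, (if a ∈ J then (if a ∈ S ↔ a ∈ I then -X else X)
      else if a ∈ I then (if a ∈ S then X else 0) else (if a ∈ S then 1 - X else 1) : R[X]) =
      (if a ∈ I \ (J ∪ S) then 0 else 1) * ((if a ∈ J ∩ S then -1 else 1) *
        (if a ∈ J \ I then -1 else 1)) * (if a ∈ I ∪ J then X else 1) *
        (if a ∈ S \ (I ∪ J) then 1 - X else 1) := by
    intro a
    by_cases hJ : a ∈ J <;> by_cases hI : a ∈ I <;> by_cases hS : a ∈ S <;> simp [hJ, hI, hS]
  simp only [hfactor, prod_mul_distrib, ← Fintype.boole_subset_eq_prod,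
    Fintype.prod_ite_mem_const, pow_add, invEntryPoly]
  split_ifs <;> ring

theorem sum_invEntryPoly_subset_symmDiff (S I K : Finset ι) :
    ∑ J, (if J ⊆ symmDiff K S then invEntryPoly S I J else 0 : R[X]) =
      ∏ a, if a ∈ I then (if a ∈ K then X else 0) else (if a ∈ K then 1 - X else 1) := by
  have hsummand : ∀ J, (if J ⊆ symmDiff K S then invEntryPoly S I J else 0 : R[X]) =
      ∏ a, if a ∈ J then (if a ∈ symmDiff K S then (if a ∈ S ↔ a ∈ I then -X else X) else 0)
      else if a ∈ I then (if a ∈ S then X else 0) else (if a ∈ S then 1 - X else 1) := by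
    intro J
    rw [← mul_boole, Fintype.boole_subset_eq_prod, invEntryPoly_eq_prod, ← prod_mul_distrib]
    refine Fintype.prod_congr _ _ fun a => ?_
    by_cases hJ : a ∈ J <;> by_cases hT : a ∈ symmDiff K S <;> simp [hJ, hT]
  rw [Fintype.sum_congr _ _ hsummand, Fintype.sum_prod_ite_mem]
  refine Fintype.prod_congr _ _ fun a => ?_
  by_cases hK : a ∈ K <;> by_cases hI : a ∈ I <;> by_cases hS : a ∈ S <;>
    simp [hK, hI, hS, mem_symmDiff, sub_eq_neg_add]

theorem coeffSumUpTo_prod_eq_boole [Nontrivial R] {d : ℕ} (I K : Finset ι) (hK : #K ≤ d) :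
    coeffSumUpTo R d (∏ a, if a ∈ I then (if a ∈ K then X else 0)
      else (if a ∈ K then 1 - X else 1)) = if I = K then 1 else 0 := by
  have hdeg : (∏ a, if a ∈ I then (if a ∈ K then X else 0)
      else (if a ∈ K then 1 - X else 1) : R[X]).natDegree ≤ d := by
    refine (natDegree_prod_le _ _).trans (le_trans ?_ hK)
    calc ∑ a, _ ≤ ∑ a, if a ∈ K then 1 else 0 := sum_le_sum fun a _ => by
          by_cases hI : a ∈ I <;> by_cases hK : a ∈ K <;>
            simp [hI, hK, (natDegree_sub_le _ _).trans]
      _ = #K := by simp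
  have heval : ∀ a, eval 1 (if a ∈ I then (if a ∈ K then X else 0)
      else (if a ∈ K then 1 - X else 1) : R[X]) = if a ∈ I ↔ a ∈ K then 1 else 0 := by
    intro a
    by_cases hI : a ∈ I <;> by_cases hK : a ∈ K <;> simp [hI, hK]
  rw [coeffSumUpTo_eq_eval_one hdeg, eval_prod, Fintype.prod_congr _ _ heval, prod_boole]
  simp [← Finset.ext_iff]

end

section

variable {ι R : Type*} [DecidableEq ι] [CommRing R]

theorem coeffSumUpTo_invEntryPoly (d : ℕ) (S I J : Finset ι) :
    coeffSumUpTo R d (invEntryPoly S I J) = if I ⊆ J ∪ S then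
      (-1) ^ (#(J ∩ S) + #(J \ I)) * coeffSumUpTo R d (X ^ #(I ∪ J) * (1 - X) ^ #(S \ (I ∪ J)))
      else 0 := by
  unfold invEntryPoly
  split_ifs
  · rw [mul_assoc, coeffSumUpTo_neg_one_pow_mul]
  · exact map_zero _

theorem coeffSumUpTo_invEntryPoly_of_lt {d : ℕ} {S I J : Finset ι} (h : d < #(I ∪ J)) :
    coeffSumUpTo R d (invEntryPoly S I J) = 0 := by
  simp [coeffSumUpTo_invEntryPoly, coeffSumUpTo_X_pow_mul_of_lt h]

end

noncomputable def invZdS (n d : ℕ) (S : Finset (Fin n)) :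
    Matrix {J : Finset (Fin n) // #J ≤ d} {J : Finset (Fin n) // #J ≤ d} ℝ :=
  Matrix.of fun I J => coeffSumUpTo ℝ d (invEntryPoly S I.1 J.1)

theorem invZdS_mul_ZdS (n d : ℕ) (S : Finset (Fin n)) : invZdS n d S * ZdS n d S = 1 := by
  ext I K
  have hlarge : ∀ J : Finset (Fin n), ¬ #J ≤ d →
      coeffSumUpTo ℝ d (if J ⊆ symmDiff K.1 S then invEntryPoly S I.1 J else 0) = 0 := by
    intro J hJ
    split_ifs
    · exact coeffSumUpTo_invEntryPoly_of_lt
        ((not_le.mp hJ).trans_le (card_le_card subset_union_right))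
    · exact map_zero _
  calc (invZdS n d S * ZdS n d S) I K
      = ∑ J : {J : Finset (Fin n) // #J ≤ d},
          coeffSumUpTo ℝ d (if J.1 ⊆ symmDiff K.1 S then invEntryPoly S I.1 J.1 else 0) := by
        simp [Matrix.mul_apply, invZdS, ZdS, apply_ite]
    _ = coeffSumUpTo ℝ d (∑ J, if J ⊆ symmDiff K.1 S then invEntryPoly S I.1 J else 0) := by
        rw [map_sum, ← sum_subtype (univ.filter fun J : Finset (Fin n) => #J ≤ d) (by simp)
          fun J => coeffSumUpTo ℝ d (if J ⊆ symmDiff K.1 S then invEntryPoly S I.1 J else 0),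
          sum_filter_of_ne]
        exact fun J _ hne => by_contra fun hJ => hne (hlarge J hJ)
    _ = (1 : Matrix _ _ ℝ) I K := by
        simp only [sum_invEntryPoly_subset_symmDiff, coeffSumUpTo_prod_eq_boole _ _ K.2,
          one_apply, Subtype.ext_iff]

theorem inv_ZdS (n d : ℕ) (S : Finset (Fin n)) : (ZdS n d S)⁻¹ = invZdS n d S :=
  inv_eq_left_inv (invZdS_mul_ZdS n d S)

theorem stmt_8_general (n d : ℕ) (S : Finset (Fin n))
    (I J : {J : Finset (Fin n) // J.card ≤ d}) :
    let B := (ZdS n d S)⁻¹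
    (¬ I.1 ⊆ J.1 ∪ S → B I J = 0) ∧
    (I.1 ⊆ J.1 ∪ S → d < (I.1 ∪ J.1).card → B I J = 0) ∧
    (I.1 ⊆ J.1 ∪ S → (I.1 ∪ J.1).card ≤ d → S ⊆ I.1 ∪ J.1 →
      B I J = (-1 : ℝ) ^ ((J.1 ∩ S).card + (J.1 \ I.1).card)) ∧
    (I.1 ⊆ J.1 ∪ S → (I.1 ∪ J.1).card ≤ d → ¬ S ⊆ I.1 ∪ J.1 →
      B I J = (-1 : ℝ) ^ ((J.1 ∩ S).card + (J.1 \ I.1).card + (d - (I.1 ∪ J.1).card)) *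
        (Nat.choose ((S \ (I.1 ∪ J.1)).card - 1) (d - (I.1 ∪ J.1).card) : ℝ)) := by
  intro B
  have hB : B I J = coeffSumUpTo ℝ d (invEntryPoly S I.1 J.1) := by
    simp [B, inv_ZdS, invZdS]
  refine ⟨fun hIJ => ?_, fun _ hlt => ?_, fun hIJ hle hS => ?_, fun hIJ hle hS => ?_⟩
  · rw [hB, coeffSumUpTo_invEntryPoly, if_neg hIJ]
  · rw [hB, coeffSumUpTo_invEntryPoly_of_lt hlt]
  · rw [hB, coeffSumUpTo_invEntryPoly, if_pos hIJ, coeffSumUpTo_X_pow_mul_one_sub_X_pow hle,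
      if_pos (card_eq_zero.mpr (sdiff_eq_empty_iff_subset.mpr hS)), mul_one]
  · rw [hB, coeffSumUpTo_invEntryPoly, if_pos hIJ, coeffSumUpTo_X_pow_mul_one_sub_X_pow hle,
      if_neg (fun h => hS (sdiff_eq_empty_iff_subset.mp (card_eq_zero.mp h))), pow_add]
    ring

theorem stmt_8 (n d : ℕ) (hd : d ≤ n) (S : Finset (Fin n))
    (I J : {J : Finset (Fin n) // J.card ≤ d}) :
    let B := (ZdS n d S)⁻¹
    (¬ I.1 ⊆ J.1 ∪ S → B I J = 0) ∧
    (I.1 ⊆ J.1 ∪ S → d < (I.1 ∪ J.1).card → B I J = 0) ∧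
    (I.1 ⊆ J.1 ∪ S → (I.1 ∪ J.1).card ≤ d → S ⊆ I.1 ∪ J.1 →
      B I J = (-1 : ℝ) ^ ((J.1 ∩ S).card + (J.1 \ I.1).card)) ∧
    (I.1 ⊆ J.1 ∪ S → (I.1 ∪ J.1).card ≤ d → ¬ S ⊆ I.1 ∪ J.1 →
      B I J = (-1 : ℝ) ^ ((J.1 ∩ S).card + (J.1 \ I.1).card + (d - (I.1 ∪ J.1).card)) *
        (Nat.choose ((S \ (I.1 ∪ J.1)).card - 1) (d - (I.1 ∪ J.1).card) : ℝ)) :=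
  stmt_8_general n d S I J
end

section
/- Let n, d ∈ ℕ with d ≤ n and S ⊆ [n]. Then every entry of the matrix Z_{d(S)}^{-1} has absolute value at most 2^{|S|}. -/
open Finset Matrix

lemma keysum {n : ℕ} (A B : Finset (Fin n)) :
    ∑ K ∈ B.powerset, (if A ⊆ K then ((-1:ℝ)) ^ K.card else 0)
      = if A = B then (-1:ℝ) ^ A.card else 0 := by
  by_cases hAB : A ⊆ B
  · rw [← Finset.sum_filter]
    rw [Finset.sum_nbij' (i := fun K => K \ A) (j := fun T => A ∪ T)
        (t := (B \ A).powerset) (g := fun T => (-1:ℝ) ^ (A ∪ T).card)]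
    · have : ∀ T ∈ (B \ A).powerset, ((-1:ℝ)) ^ (A ∪ T).card
          = (-1:ℝ) ^ A.card * (-1:ℝ) ^ T.card := by
        intro T hT
        rw [Finset.mem_powerset] at hT
        have hdisj : Disjoint A T := by
          refine Finset.disjoint_left.2 fun x hxA hxT => ?_
          exact (Finset.mem_sdiff.1 (hT hxT)).2 hxA
        rw [Finset.card_union_of_disjoint hdisj, pow_add]
      rw [Finset.sum_congr rfl this, ← Finset.mul_sum]
      have hz : (∑ T ∈ (B \ A).powerset, ((-1:ℝ)) ^ T.card)
          = if B \ A = ∅ then 1 else 0 := by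
        have h := @Finset.sum_powerset_neg_one_pow_card (Fin n) _ (B \ A)
        have h2 := congrArg (fun z : ℤ => (z : ℝ)) h
        push_cast at h2
        rw [h2]
      rw [hz]
      by_cases hBA : A = B
      · simp [hBA]
      · have : B \ A ≠ ∅ := by
          intro h
          exact hBA (Finset.Subset.antisymm hAB (Finset.sdiff_eq_empty_iff_subset.1 h))
        simp [this, hBA]
    · intro K hK
      simp only [Finset.mem_filter, Finset.mem_powerset] at hK
      exact Finset.mem_powerset.2 (Finset.sdiff_subset_sdiff hK.1 le_rfl)
    · intro T hT
      rw [Finset.mem_powerset] at hT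
      refine Finset.mem_filter.2 ⟨Finset.mem_powerset.2 ?_, Finset.subset_union_left⟩
      exact Finset.union_subset hAB (hT.trans Finset.sdiff_subset)
    · intro K hK
      simp only [Finset.mem_filter, Finset.mem_powerset] at hK
      exact Finset.union_sdiff_of_subset hK.2
    · intro T hT
      rw [Finset.mem_powerset] at hT
      have hdisj : Disjoint A T := by
        refine Finset.disjoint_left.2 fun x hxA hxT => ?_
        exact (Finset.mem_sdiff.1 (hT hxT)).2 hxA
      rw [Finset.union_sdiff_cancel_left hdisj]
    · intro K hK
      simp only [Finset.mem_filter, Finset.mem_powerset] at hK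
      rw [Finset.union_sdiff_of_subset hK.2]
  · have h1 : ∀ K ∈ B.powerset, (if A ⊆ K then ((-1:ℝ)) ^ K.card else 0) = 0 := by
      intro K hK
      rw [Finset.mem_powerset] at hK
      rw [if_neg fun h => hAB (h.trans hK)]
    rw [Finset.sum_congr rfl h1, Finset.sum_const_zero,
      if_neg (fun h => hAB (le_of_eq h))]

/-- The Möbius matrix. -/
noncomputable def Mob (n d : ℕ) :
    Matrix {J : Finset (Fin n) // J.card ≤ d} {J : Finset (Fin n) // J.card ≤ d} ℝ :=
  Matrix.of fun I J =>
    if (I : Finset (Fin n)) ⊆ (J : Finset (Fin n)) then (-1:ℝ) ^ ((J.1 \ I.1).card) else 0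

/-- The matrix `B = Z * M`. -/
noncomputable def Bmat (n d : ℕ) (S : Finset (Fin n)) :
    Matrix {J : Finset (Fin n) // J.card ≤ d} {J : Finset (Fin n) // J.card ≤ d} ℝ :=
  Matrix.of fun I J =>
    if (J.1 \ S = I.1 \ S ∧ J.1 ∩ S ⊆ I.1) then (-1:ℝ) ^ ((J.1 ∩ S).card) else 0

lemma sum_sub {n d : ℕ} (f : Finset (Fin n) → ℝ) (J : Finset (Fin n)) (hJ : J.card ≤ d)
    (hf : ∀ K : Finset (Fin n), K.card ≤ d → f K ≠ 0 → K ⊆ J) :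
    ∑ K : {K : Finset (Fin n) // K.card ≤ d}, f K.1 = ∑ K ∈ J.powerset, f K := by
  rw [← Finset.sum_subtype
      (Finset.univ.filter (fun K : Finset (Fin n) => K.card ≤ d)) (by simp) f]
  refine (Finset.sum_subset ?_ ?_).symm
  · intro K hK
    rw [Finset.mem_powerset] at hK
    exact Finset.mem_filter.2 ⟨Finset.mem_univ _, (Finset.card_le_card hK).trans hJ⟩
  · intro K hK hK2
    by_contra h
    exact hK2 (Finset.mem_powerset.2 (hf K (Finset.mem_filter.1 hK).2 h))

lemma sign_cancel (a b : ℕ) : ((-1:ℝ)) ^ (a + b) * (-1:ℝ) ^ a = (-1:ℝ) ^ b := by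
  rw [← pow_add, show a + b + a = 2 * a + b by ring, pow_add, pow_mul]
  norm_num

lemma cond_equiv {n : ℕ} (I K J S : Finset (Fin n)) (hK : K ⊆ J) :
    I ⊆ symmDiff K S ↔ (I \ S ⊆ K ∧ K ⊆ J \ (I ∩ S)) := by
  constructor
  · intro h
    constructor
    · intro x hx
      rw [Finset.mem_sdiff] at hx
      have := h hx.1
      rw [Finset.mem_symmDiff] at this
      tauto
    · intro x hx
      rw [Finset.mem_sdiff, Finset.mem_inter]
      refine ⟨hK hx, fun hc => ?_⟩
      have := h hc.1
      rw [Finset.mem_symmDiff] at this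
      tauto
  · rintro ⟨h1, h2⟩ x hx
    rw [Finset.mem_symmDiff]
    by_cases hxS : x ∈ S
    · refine Or.inr ⟨hxS, fun hxK => ?_⟩
      have := h2 hxK
      rw [Finset.mem_sdiff, Finset.mem_inter] at this
      tauto
    · exact Or.inl ⟨h1 (Finset.mem_sdiff.2 ⟨hx, hxS⟩), hxS⟩

lemma cond_equiv2 {n : ℕ} (I J S : Finset (Fin n)) :
    I \ S = J \ (I ∩ S) ↔ (J \ S = I \ S ∧ J ∩ S ⊆ I) := by
  constructor
  · intro h
    constructor
    · ext x
      have hx := Finset.ext_iff.1 h x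
      simp only [Finset.mem_sdiff, Finset.mem_inter] at hx ⊢
      tauto
    · intro x hx
      rw [Finset.mem_inter] at hx
      by_contra hxI
      have hx2 := Finset.ext_iff.1 h x
      simp only [Finset.mem_sdiff, Finset.mem_inter] at hx2
      tauto
  · rintro ⟨h1, h2⟩
    ext x
    have hx1 := Finset.ext_iff.1 h1 x
    have hx2 : x ∈ J ∩ S → x ∈ I := fun h => h2 h
    simp only [Finset.mem_sdiff, Finset.mem_inter] at hx1 ⊢
    by_cases hxS : x ∈ S
    · constructor
      · intro hc; tauto
      · rintro ⟨hxJ, hc⟩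
        exact absurd (h2 (Finset.mem_inter.2 ⟨hxJ, hxS⟩)) (fun hI => hc ⟨hI, hxS⟩)
    · tauto

lemma ZM_eq {n d : ℕ} (S : Finset (Fin n)) : ZdS n d S * Mob n d = Bmat n d S := by
  ext I J
  rw [Matrix.mul_apply]
  have hstep : ∀ K : {K : Finset (Fin n) // K.card ≤ d},
      ZdS n d S I K * Mob n d K J
      = (fun K : Finset (Fin n) =>
          (if (I : Finset (Fin n)) ⊆ symmDiff K S then (1:ℝ) else 0) *
          (if K ⊆ J.1 then (-1:ℝ) ^ ((J.1 \ K).card) else 0)) K.1 := fun K => rfl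
  rw [Finset.sum_congr rfl (fun K _ => hstep K)]
  rw [sum_sub (fun K : Finset (Fin n) =>
      (if (I : Finset (Fin n)) ⊆ symmDiff K S then (1:ℝ) else 0) *
      (if K ⊆ J.1 then (-1:ℝ) ^ ((J.1 \ K).card) else 0)) J.1 J.2 (fun K hK hne => by
    by_contra h
    exact hne (by simp [h]))]
  have hstep2 : ∀ K ∈ (J.1).powerset,
      (if (I : Finset (Fin n)) ⊆ symmDiff K S then (1:ℝ) else 0) *
        (if K ⊆ J.1 then (-1:ℝ) ^ ((J.1 \ K).card) else 0)
      = if (I.1 \ S ⊆ K ∧ K ⊆ J.1 \ (I.1 ∩ S)) then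
          (-1:ℝ) ^ (J.1.card) * (-1:ℝ) ^ K.card else 0 := by
    intro K hK
    rw [Finset.mem_powerset] at hK
    rw [if_pos hK]
    by_cases hc : (I : Finset (Fin n)) ⊆ symmDiff K S
    · rw [if_pos hc, if_pos ((cond_equiv I.1 K J.1 S hK).1 hc), one_mul]
      have hcard : K.card + (J.1 \ K).card = J.1.card := by
        rw [add_comm]; exact Finset.card_sdiff_add_card_eq_card hK
      have := sign_cancel K.card ((J.1 \ K).card)
      rw [hcard] at this
      rw [← this]
    · rw [if_neg hc, if_neg (fun h => hc ((cond_equiv I.1 K J.1 S hK).2 h)), zero_mul]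
  rw [Finset.sum_congr rfl hstep2]
  rw [← Finset.sum_subset (Finset.powerset_mono.2 (Finset.sdiff_subset : J.1 \ (I.1 ∩ S) ⊆ J.1))
    (fun K hK hK2 => by
      rw [Finset.mem_powerset] at hK2
      exact if_neg (fun h => hK2 h.2))]
  have hstep3 : ∀ K ∈ (J.1 \ (I.1 ∩ S)).powerset,
      (if (I.1 \ S ⊆ K ∧ K ⊆ J.1 \ (I.1 ∩ S)) then
          (-1:ℝ) ^ (J.1.card) * (-1:ℝ) ^ K.card else 0)
      = (-1:ℝ) ^ (J.1.card) * (if I.1 \ S ⊆ K then (-1:ℝ) ^ K.card else 0) := by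
    intro K hK
    rw [Finset.mem_powerset] at hK
    by_cases hc : I.1 \ S ⊆ K
    · rw [if_pos ⟨hc, hK⟩, if_pos hc]
    · rw [if_neg (fun h => hc h.1), if_neg hc, mul_zero]
  rw [Finset.sum_congr rfl hstep3, ← Finset.mul_sum, keysum]
  show _ = Bmat n d S I J
  simp only [Bmat, Matrix.of_apply]
  by_cases hc : J.1 \ S = I.1 \ S ∧ J.1 ∩ S ⊆ I.1
  · rw [if_pos ((cond_equiv2 I.1 J.1 S).2 hc), if_pos hc]
    have hset : J.1 \ (J.1 ∩ S) = I.1 \ S := by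
      rw [← hc.1]
      ext x
      simp only [Finset.mem_sdiff, Finset.mem_inter]
      tauto
    have hcard : J.1.card = (I.1 \ S).card + (J.1 ∩ S).card := by
      rw [← hset,
        Finset.card_sdiff_add_card_eq_card (Finset.inter_subset_left : J.1 ∩ S ⊆ J.1)]
    rw [hcard]
    exact sign_cancel _ _
  · rw [if_neg (fun h => hc ((cond_equiv2 I.1 J.1 S).1 h)), if_neg hc, mul_zero]

lemma BB_eq {n d : ℕ} (S : Finset (Fin n)) : Bmat n d S * Bmat n d S = 1 := by
  ext I J
  rw [Matrix.mul_apply, Matrix.one_apply]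
  have hstep : ∀ K : {K : Finset (Fin n) // K.card ≤ d},
      Bmat n d S I K * Bmat n d S K J = (fun K : Finset (Fin n) =>
        (if (K \ S = I.1 \ S ∧ K ∩ S ⊆ I.1) then (-1:ℝ) ^ ((K ∩ S).card) else 0) *
        (if (J.1 \ S = K \ S ∧ J.1 ∩ S ⊆ K) then (-1:ℝ) ^ ((J.1 ∩ S).card) else 0)) K.1 :=
    fun K => rfl
  rw [Finset.sum_congr rfl (fun K _ => hstep K)]
  rw [sum_sub (fun K : Finset (Fin n) =>
      (if (K \ S = I.1 \ S ∧ K ∩ S ⊆ I.1) then (-1:ℝ) ^ ((K ∩ S).card) else 0) *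
      (if (J.1 \ S = K \ S ∧ J.1 ∩ S ⊆ K) then (-1:ℝ) ^ ((J.1 ∩ S).card) else 0))
      I.1 I.2 (fun K hK hne => by
    by_cases h1 : K \ S = I.1 \ S ∧ K ∩ S ⊆ I.1
    · intro x hx
      by_cases hxS : x ∈ S
      · exact h1.2 (Finset.mem_inter.2 ⟨hx, hxS⟩)
      · have : x ∈ I.1 \ S := h1.1 ▸ Finset.mem_sdiff.2 ⟨hx, hxS⟩
        exact (Finset.mem_sdiff.1 this).1
    · exact absurd (by beta_reduce; rw [if_neg h1, zero_mul]) hne)]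
  have hstep2 : ∀ K ∈ (I.1).powerset,
      (if (K \ S = I.1 \ S ∧ K ∩ S ⊆ I.1) then (-1:ℝ) ^ ((K ∩ S).card) else 0) *
      (if (J.1 \ S = K \ S ∧ J.1 ∩ S ⊆ K) then (-1:ℝ) ^ ((J.1 ∩ S).card) else 0)
      = (if J.1 \ S = I.1 \ S then (1:ℝ) else 0) * ((-1:ℝ) ^ ((J.1 ∩ S).card) *
        (if (I.1 \ S ⊆ K ∧ J.1 ∩ S ⊆ K) then (-1:ℝ) ^ ((K ∩ S).card) else 0)) := by
    intro K hK
    rw [Finset.mem_powerset] at hK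
    have hiff : K \ S = I.1 \ S ↔ I.1 \ S ⊆ K := by
      constructor
      · intro h
        rw [← h]
        exact Finset.sdiff_subset
      · intro h
        refine Finset.Subset.antisymm (Finset.sdiff_subset_sdiff hK le_rfl)
          (fun x hx => Finset.mem_sdiff.2 ⟨h hx, (Finset.mem_sdiff.1 hx).2⟩)
    by_cases hJS : J.1 \ S = I.1 \ S
    · rw [if_pos hJS, one_mul]
      by_cases hc : I.1 \ S ⊆ K ∧ J.1 ∩ S ⊆ K
      · have h1 : K \ S = I.1 \ S ∧ K ∩ S ⊆ I.1 :=
          ⟨hiff.2 hc.1, (Finset.inter_subset_left).trans hK⟩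
        have h2 : J.1 \ S = K \ S ∧ J.1 ∩ S ⊆ K := ⟨hJS.trans h1.1.symm, hc.2⟩
        rw [if_pos h1, if_pos h2, if_pos hc]
        ring
      · rw [if_neg hc]
        by_cases h1 : K \ S = I.1 \ S ∧ K ∩ S ⊆ I.1
        · rw [if_neg (fun h2 : J.1 \ S = K \ S ∧ J.1 ∩ S ⊆ K =>
            hc ⟨hiff.1 h1.1, h2.2⟩), mul_zero, mul_zero]
        · rw [if_neg h1, zero_mul, mul_zero]
    · rw [if_neg hJS, zero_mul]
      by_cases h1 : K \ S = I.1 \ S ∧ K ∩ S ⊆ I.1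
      · rw [if_neg (fun h2 : J.1 \ S = K \ S ∧ J.1 ∩ S ⊆ K =>
          hJS (h2.1.trans h1.1)), mul_zero]
      · rw [if_neg h1, zero_mul]
  rw [Finset.sum_congr rfl hstep2, ← Finset.mul_sum, ← Finset.mul_sum]
  have hbij : ∑ K ∈ (I.1).powerset,
      (if (I.1 \ S ⊆ K ∧ J.1 ∩ S ⊆ K) then (-1:ℝ) ^ ((K ∩ S).card) else 0)
      = if J.1 ∩ S = I.1 ∩ S then (-1:ℝ) ^ ((J.1 ∩ S).card) else 0 := by
    have hsplit : ∀ K ∈ (I.1).powerset,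
        (if (I.1 \ S ⊆ K ∧ J.1 ∩ S ⊆ K) then (-1:ℝ) ^ ((K ∩ S).card) else 0)
        = if I.1 \ S ⊆ K then
            (if J.1 ∩ S ⊆ K then (-1:ℝ) ^ ((K ∩ S).card) else 0) else 0 := by
      intro K _
      by_cases h1 : I.1 \ S ⊆ K
      · by_cases h2 : J.1 ∩ S ⊆ K
        · rw [if_pos ⟨h1, h2⟩, if_pos h1, if_pos h2]
        · rw [if_neg (fun h => h2 h.2), if_pos h1, if_neg h2]
      · rw [if_neg (fun h => h1 h.1), if_neg h1]
    rw [Finset.sum_congr rfl hsplit, ← Finset.sum_filter]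
    rw [Finset.sum_nbij' (i := fun K => K ∩ S) (j := fun U => (I.1 \ S) ∪ U)
        (t := (I.1 ∩ S).powerset)
        (g := fun U => if J.1 ∩ S ⊆ U then (-1:ℝ) ^ U.card else 0)]
    · exact keysum _ _
    · intro K hK
      simp only [Finset.mem_filter, Finset.mem_powerset] at hK
      exact Finset.mem_powerset.2 (Finset.inter_subset_inter hK.1 le_rfl)
    · intro U hU
      rw [Finset.mem_powerset] at hU
      refine Finset.mem_filter.2 ⟨Finset.mem_powerset.2
        (Finset.union_subset Finset.sdiff_subset
          (hU.trans Finset.inter_subset_left)), Finset.subset_union_left⟩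
    · intro K hK
      simp only [Finset.mem_filter, Finset.mem_powerset] at hK
      ext x
      simp only [Finset.mem_union, Finset.mem_sdiff, Finset.mem_inter]
      constructor
      · rintro (h | h)
        · exact hK.2 (Finset.mem_sdiff.2 h)
        · exact h.1
      · intro hx
        by_cases hxS : x ∈ S
        · exact Or.inr ⟨hx, hxS⟩
        · exact Or.inl ⟨hK.1 hx, hxS⟩
    · intro U hU
      rw [Finset.mem_powerset] at hU
      ext x
      simp only [Finset.mem_inter, Finset.mem_union, Finset.mem_sdiff]
      constructor
      · rintro ⟨h | h, hxS⟩
        · exact absurd hxS h.2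
        · exact h
      · intro hx
        exact ⟨Or.inr hx, (Finset.mem_inter.1 (hU hx)).2⟩
    · intro K hK
      simp only [Finset.mem_filter, Finset.mem_powerset] at hK
      refine if_congr ?_ rfl rfl
      constructor
      · intro h x hx
        exact Finset.mem_inter.2 ⟨h hx, (Finset.mem_inter.1 hx).2⟩
      · intro h x hx
        exact Finset.inter_subset_left (h hx)
  rw [hbij]
  by_cases h1 : J.1 \ S = I.1 \ S
  · by_cases h2 : J.1 ∩ S = I.1 ∩ S
    · have hIJ : I = J := by
        refine Subtype.ext ?_
        have := Finset.sdiff_union_inter I.1 S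
        rw [← this, ← h1, ← h2, Finset.sdiff_union_inter]
      rw [if_pos h1, if_pos h2, if_pos hIJ]
      have := sign_cancel ((J.1 ∩ S).card) 0
      rw [add_zero, pow_zero] at this
      rw [← pow_add] at this ⊢
      rw [this, one_mul]
    · have hIJ : ¬ I = J := fun h => h2 (by rw [h])
      rw [if_neg h2, if_neg hIJ, mul_zero, mul_zero]
  · have hIJ : ¬ I = J := fun h => h1 (by rw [h])
    rw [if_neg h1, if_neg hIJ, zero_mul]

theorem stmt_9 (n d : ℕ) (hd : d ≤ n) (S : Finset (Fin n)) :
    ∀ I J : {J : Finset (Fin n) // J.card ≤ d},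
      |((ZdS n d S)⁻¹) I J| ≤ (2 : ℝ) ^ S.card := by
  have hinv : (ZdS n d S)⁻¹ = Mob n d * Bmat n d S := by
    apply Matrix.inv_eq_right_inv
    rw [← Matrix.mul_assoc, ZM_eq, BB_eq]
  intro I J
  rw [hinv, Matrix.mul_apply]
  calc |∑ K, Mob n d I K * Bmat n d S K J|
      ≤ ∑ K, |Mob n d I K * Bmat n d S K J| := Finset.abs_sum_le_sum_abs _ _
    _ ≤ ∑ K : {K : Finset (Fin n) // K.card ≤ d},
        (if J.1 \ S = K.1 \ S then (1:ℝ) else 0) := by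
        refine Finset.sum_le_sum fun K _ => ?_
        by_cases hc : J.1 \ S = K.1 \ S
        · rw [if_pos hc, abs_mul]
          have h1 : |Mob n d I K| ≤ 1 := by
            simp only [Mob, Matrix.of_apply]
            split <;> simp [abs_pow]
          have h2 : |Bmat n d S K J| ≤ 1 := by
            simp only [Bmat, Matrix.of_apply]
            split <;> simp [abs_pow]
          calc |Mob n d I K| * |Bmat n d S K J| ≤ 1 * 1 :=
                mul_le_mul h1 h2 (abs_nonneg _) zero_le_one
            _ = 1 := one_mul 1
        · rw [if_neg hc]
          have hz : Bmat n d S K J = 0 := by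
            simp only [Bmat, Matrix.of_apply]
            rw [if_neg (fun h => hc h.1)]
          rw [hz, mul_zero, abs_zero]
    _ = ((Finset.univ.filter
          (fun K : {K : Finset (Fin n) // K.card ≤ d} => J.1 \ S = K.1 \ S)).card : ℝ) := by
        rw [Finset.sum_boole]
    _ ≤ ((S.powerset.card : ℕ) : ℝ) := by
        refine Nat.cast_le.2 (Finset.card_le_card_of_injOn (fun K => K.1 ∩ S)
          (fun K _ => Finset.mem_powerset.2 Finset.inter_subset_right) ?_)
        intro K1 h1 K2 h2 heq
        simp only [Finset.coe_filter, Set.mem_setOf_eq] at h1 h2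
        refine Subtype.ext ?_
        have e1 := Finset.sdiff_union_inter K1.1 S
        have e2 := Finset.sdiff_union_inter K2.1 S
        simp only at heq
        rw [← e1, ← e2, ← h1.2, ← h2.2, heq]
    _ = (2:ℝ) ^ S.card := by
        rw [Finset.card_powerset]
        push_cast
        ring
end

section
/- Let n, t ∈ ℕ with t + 1 ≤ n, let Z_t be the P_t(n) × P_t(n) matrix with [Z_t]_{I,J} = 1 iff I ⊆ J, and let J ⊆ [n] with |J| = t + 1. Then for every I ∈ P_t(n), the I-th coordinate of the vector Z_t^{-1} Z_J (where Z_J ∈ ℝ^{P_t(n)} is the t-zeta vector of J) equals (−1)^{t − |I|} if I ⊆ J and equals 0 otherwise. -/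
open Finset Matrix

lemma neg_one_pow_sub' {s m : ℕ} (h : s ≤ m) : ((-1:ℝ))^(m - s) = (-1)^m * (-1)^s := by
  have h1 : ((-1:ℝ))^(m-s) * (-1)^s = (-1)^m := by rw [← pow_add, Nat.sub_add_cancel h]
  have h2 : ((-1:ℝ))^s * (-1)^s = 1 := by
    rw [← pow_add]; exact Even.neg_one_pow ⟨s, rfl⟩
  calc ((-1:ℝ))^(m-s) = (-1)^(m-s) * ((-1)^s * (-1)^s) := by rw [h2, mul_one]
    _ = (-1)^m * (-1)^s := by rw [← mul_assoc, h1]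

lemma sum_pow_real {α : Type*} [DecidableEq α] (x : Finset α) :
    (∑ m ∈ x.powerset, (-1 : ℝ) ^ m.card) = if x = ∅ then 1 else 0 := by
  have h := Finset.sum_powerset_neg_one_pow_card (x := x)
  have h2 := congrArg (fun z : ℤ => (z:ℝ)) h
  push_cast at h2
  split at h2 <;> split <;> simp_all

lemma sum_mobius {n : ℕ} (I K : Finset (Fin n)) :
    ∑ L ∈ K.powerset.filter (fun L => I ⊆ L), ((-1:ℝ))^(K.card - L.card)
      = if I = K then 1 else 0 := by
  by_cases hIK : I ⊆ K
  · have hre : ∑ L ∈ K.powerset.filter (fun L => I ⊆ L), ((-1:ℝ))^(K.card - L.card)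
        = ∑ S ∈ (K \ I).powerset, ((-1:ℝ))^((K \ I).card - S.card) := by
      refine Finset.sum_nbij' (fun L => L \ I) (fun S => S ∪ I) ?_ ?_ ?_ ?_ ?_
      · intro L hL
        simp only [mem_filter, mem_powerset] at hL
        exact mem_powerset.2 (sdiff_subset_sdiff hL.1 le_rfl)
      · intro S hS
        simp only [mem_powerset] at hS
        simp only [mem_filter, mem_powerset]
        exact ⟨union_subset (hS.trans sdiff_subset) hIK, subset_union_right⟩
      · intro L hL
        simp only [mem_filter, mem_powerset] at hL
        exact sdiff_union_of_subset hL.2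
      · intro S hS
        simp only [mem_powerset] at hS
        have hd : Disjoint S I := Finset.disjoint_of_subset_left hS sdiff_disjoint
        show (S ∪ I) \ I = S
        rw [union_sdiff_distrib, sdiff_self]
        simp [Finset.sdiff_eq_self_of_disjoint hd]
      · intro L hL
        simp only [mem_filter, mem_powerset] at hL
        congr 1
        have h1 := card_le_card hL.1
        have h2 := card_le_card hL.2
        rw [card_sdiff_of_subset hIK, card_sdiff_of_subset hL.2]
        omega
    rw [hre]
    have hc : ∀ S ∈ (K\I).powerset, ((-1:ℝ))^((K\I).card - S.card)
        = (-1)^(K\I).card * (-1)^S.card :=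
      fun S hS => neg_one_pow_sub' (card_le_card (mem_powerset.1 hS))
    rw [Finset.sum_congr rfl hc, ← Finset.mul_sum, sum_pow_real]
    by_cases h : K \ I = ∅
    · have hIK2 : I = K := Subset.antisymm hIK (sdiff_eq_empty_iff_subset.1 h)
      simp [h, hIK2]
    · have hne : I ≠ K := fun e => h (by simp [e])
      simp [h, hne]
  · have h1 : I ≠ K := by rintro rfl; exact hIK le_rfl
    rw [if_neg h1]
    exact Finset.sum_eq_zero fun L hL =>
      absurd ((mem_filter.1 hL).2.trans (mem_powerset.1 (mem_filter.1 hL).1)) hIK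

lemma sum_mobius2 {n : ℕ} (I K : Finset (Fin n)) :
    ∑ L ∈ K.powerset.filter (fun L => I ⊆ L), ((-1:ℝ))^(L.card - I.card)
      = if I = K then 1 else 0 := by
  by_cases hIK : I ⊆ K
  · have hre : ∑ L ∈ K.powerset.filter (fun L => I ⊆ L), ((-1:ℝ))^(L.card - I.card)
        = ∑ S ∈ (K \ I).powerset, ((-1:ℝ))^(S.card) := by
      refine Finset.sum_nbij' (fun L => L \ I) (fun S => S ∪ I) ?_ ?_ ?_ ?_ ?_
      · intro L hL
        simp only [mem_filter, mem_powerset] at hL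
        exact mem_powerset.2 (sdiff_subset_sdiff hL.1 le_rfl)
      · intro S hS
        simp only [mem_powerset] at hS
        simp only [mem_filter, mem_powerset]
        exact ⟨union_subset (hS.trans sdiff_subset) hIK, subset_union_right⟩
      · intro L hL
        simp only [mem_filter, mem_powerset] at hL
        exact sdiff_union_of_subset hL.2
      · intro S hS
        simp only [mem_powerset] at hS
        have hd : Disjoint S I := Finset.disjoint_of_subset_left hS sdiff_disjoint
        show (S ∪ I) \ I = S
        rw [union_sdiff_distrib, sdiff_self]
        simp [Finset.sdiff_eq_self_of_disjoint hd]
      · intro L hL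
        simp only [mem_filter, mem_powerset] at hL
        rw [card_sdiff_of_subset hL.2]
    rw [hre, sum_pow_real]
    by_cases h : K \ I = ∅
    · have hIK2 : I = K := Subset.antisymm hIK (sdiff_eq_empty_iff_subset.1 h)
      simp [h, hIK2]
    · have hne : I ≠ K := fun e => h (by simp [e])
      simp [h, hne]
  · have h1 : I ≠ K := by rintro rfl; exact hIK le_rfl
    rw [if_neg h1]
    exact Finset.sum_eq_zero fun L hL =>
      absurd ((mem_filter.1 hL).2.trans (mem_powerset.1 (mem_filter.1 hL).1)) hIK

theorem stmt_10 (n t : ℕ) (ht : t + 1 ≤ n) (J : Finset (Fin n)) (hJ : J.card = t + 1) :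
    let Zt : Matrix {K : Finset (Fin n) // K.card ≤ t} {K : Finset (Fin n) // K.card ≤ t} ℝ :=
      Matrix.of fun I K => if (I : Finset (Fin n)) ⊆ (K : Finset (Fin n)) then 1 else 0
    let ZJ : {K : Finset (Fin n) // K.card ≤ t} → ℝ :=
      fun K => if (K : Finset (Fin n)) ⊆ J then 1 else 0
    ∀ I : {K : Finset (Fin n) // K.card ≤ t},
      (Zt⁻¹ *ᵥ ZJ) I = if (I : Finset (Fin n)) ⊆ J then (-1 : ℝ) ^ (t - I.1.card) else 0 := by
  intro Zt ZJ I
  have hsub : ∀ f : Finset (Fin n) → ℝ,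
      ∑ L : {K : Finset (Fin n) // K.card ≤ t}, f L.1
        = ∑ L ∈ (univ.filter fun K : Finset (Fin n) => K.card ≤ t), f L :=
    fun f => (Finset.sum_subtype _ (fun x => by simp) f).symm
  have hinv : Zt⁻¹ = Matrix.of (fun I K : {K : Finset (Fin n) // K.card ≤ t} =>
      if (I : Finset (Fin n)) ⊆ (K : Finset (Fin n))
        then ((-1:ℝ))^(K.1.card - I.1.card) else 0) := by
    apply Matrix.inv_eq_right_inv
    ext I K
    simp only [Matrix.mul_apply, Matrix.one_apply, Matrix.of_apply, Zt]
    have step : ∀ L : {K : Finset (Fin n) // K.card ≤ t},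
        (if (I:Finset (Fin n)) ⊆ L then (1:ℝ) else 0) *
        (if (L:Finset (Fin n)) ⊆ K then ((-1:ℝ))^(K.1.card - L.1.card) else 0)
        = (fun L' : Finset (Fin n) => if (I:Finset (Fin n)) ⊆ L' ∧ L' ⊆ (K:Finset (Fin n))
            then ((-1:ℝ))^(K.1.card - L'.card) else 0) L.1 := by
      intro L; by_cases h1 : (I:Finset (Fin n)) ⊆ L <;> by_cases h2 : (L:Finset (Fin n)) ⊆ K <;>
        simp [h1, h2]
    rw [Finset.sum_congr rfl (fun L _ => step L),
      hsub (fun L' : Finset (Fin n) => if (I:Finset (Fin n)) ⊆ L' ∧ L' ⊆ (K:Finset (Fin n))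
        then ((-1:ℝ))^(K.1.card - L'.card) else 0)]
    rw [← Finset.sum_subset (s₁ := K.1.powerset.filter (fun L => (I:Finset (Fin n)) ⊆ L))
      (by intro L hL
          simp only [mem_filter, mem_powerset] at hL
          simp only [mem_filter, mem_univ, true_and]
          exact (card_le_card hL.1).trans K.2)
      (by intro L _ hL
          simp only [mem_filter, mem_powerset, not_and] at hL
          by_cases h1 : (I:Finset (Fin n)) ⊆ L
          · by_cases h2 : L ⊆ (K:Finset (Fin n))
            · exact absurd h1 (hL h2)
            · simp [h2]
          · simp [h1])]
    have e2 : ∑ L ∈ K.1.powerset.filter (fun L => (I:Finset (Fin n)) ⊆ L),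
        (if (I:Finset (Fin n)) ⊆ L ∧ L ⊆ (K:Finset (Fin n))
          then ((-1:ℝ))^(K.1.card - L.card) else 0)
        = ∑ L ∈ K.1.powerset.filter (fun L => (I:Finset (Fin n)) ⊆ L),
            ((-1:ℝ))^(K.1.card - L.card) := by
      refine Finset.sum_congr rfl fun L hL => ?_
      simp only [mem_filter, mem_powerset] at hL
      rw [if_pos ⟨hL.2, hL.1⟩]
    rw [e2, sum_mobius (I:Finset (Fin n)) (K:Finset (Fin n))]
    simp [Subtype.ext_iff]
  rw [hinv]
  simp only [Matrix.mulVec, dotProduct, Matrix.of_apply, ZJ]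
  have step : ∀ K : {K : Finset (Fin n) // K.card ≤ t},
      (if (I:Finset (Fin n)) ⊆ K then ((-1:ℝ))^(K.1.card - I.1.card) else 0) *
      (if (K:Finset (Fin n)) ⊆ J then (1:ℝ) else 0)
      = (fun K' : Finset (Fin n) => if ((I:Finset (Fin n)) ⊆ K' ∧ K' ⊆ J) ∧ K'.card ≤ t
          then ((-1:ℝ))^(K'.card - I.1.card) else 0) K.1 := by
    intro K
    by_cases h1 : (I:Finset (Fin n)) ⊆ K <;> by_cases h2 : (K:Finset (Fin n)) ⊆ J <;>
      simp [h1, h2, K.2]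
  rw [Finset.sum_congr rfl (fun K _ => step K),
    hsub (fun K' : Finset (Fin n) => if ((I:Finset (Fin n)) ⊆ K' ∧ K' ⊆ J) ∧ K'.card ≤ t
      then ((-1:ℝ))^(K'.card - I.1.card) else 0)]
  by_cases hIJ : (I:Finset (Fin n)) ⊆ J
  · rw [← Finset.sum_subset
      (s₁ := (J.powerset.filter (fun K => (I:Finset (Fin n)) ⊆ K)).erase J)
      (by intro K hK
          simp only [mem_erase, mem_filter, mem_powerset] at hK
          simp only [mem_filter, mem_univ, true_and]
          have h1 : K ⊂ J := ssubset_of_ne_of_subset hK.1 hK.2.1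
          have := card_lt_card h1
          omega)
      (by intro K hK hK2
          simp only [mem_erase, mem_filter, mem_powerset, not_and] at hK2
          simp only [mem_filter, mem_univ, true_and] at hK
          by_cases h1 : (I:Finset (Fin n)) ⊆ K ∧ K ⊆ J
          · exfalso
            have hKJ : K ≠ J := by rintro rfl; omega
            exact (hK2 hKJ h1.2) h1.1
          · simp [h1])]
    have hJA : J ∈ J.powerset.filter (fun K => (I:Finset (Fin n)) ⊆ K) := by
      simp [hIJ]
    have hIJne : (I:Finset (Fin n)) ≠ J := by
      intro h; have h2 := I.2; rw [h, hJ] at h2; omega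
    have hgsum : ∑ K' ∈ J.powerset.filter (fun K => (I:Finset (Fin n)) ⊆ K),
        ((-1:ℝ))^(K'.card - I.1.card) = 0 := by
      rw [sum_mobius2]; simp [hIJne]
    have hsplit := Finset.add_sum_erase _
      (fun K' : Finset (Fin n) => ((-1:ℝ))^(K'.card - I.1.card)) hJA
    have hcongr : ∑ K' ∈ (J.powerset.filter (fun K => (I:Finset (Fin n)) ⊆ K)).erase J,
        (if ((I:Finset (Fin n)) ⊆ K' ∧ K' ⊆ J) ∧ K'.card ≤ t
          then ((-1:ℝ))^(K'.card - I.1.card) else 0)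
        = ∑ K' ∈ (J.powerset.filter (fun K => (I:Finset (Fin n)) ⊆ K)).erase J,
          ((-1:ℝ))^(K'.card - I.1.card) := by
      refine Finset.sum_congr rfl fun K hK => ?_
      simp only [mem_erase, mem_filter, mem_powerset] at hK
      have h1 : K ⊂ J := ssubset_of_ne_of_subset hK.1 hK.2.1
      have h2 := card_lt_card h1
      rw [if_pos ⟨⟨hK.2.2, hK.2.1⟩, by omega⟩]
    rw [hcongr]
    rw [hgsum] at hsplit
    have hval : ∑ K' ∈ (J.powerset.filter (fun K => (I:Finset (Fin n)) ⊆ K)).erase J,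
        ((-1:ℝ))^(K'.card - I.1.card) = -((-1:ℝ))^(J.card - I.1.card) := by
      linarith [hsplit]
    rw [hval, hJ, if_pos hIJ]
    have hle : I.1.card ≤ t := I.2
    rw [show t + 1 - I.1.card = (t - I.1.card) + 1 from by omega, pow_succ]
    ring
  · rw [if_neg hIJ, Finset.sum_eq_zero]
    intro K hK
    rw [if_neg (fun h => hIJ (h.1.1.trans h.1.2))]
end

section
/- Fix m ≥ 1 and a real P ≥ 1, and consider the scheduling instance. The fractional point x with x_{ij} = 1/(mP) for all (i,j) ∈ [m] × [m] satisfies 0 ≤ x_{ij} ≤ 1 for all (i,j), satisfies the cardinality constraint with budget T = m/P with equality (∑_{i,j} x_{ij} = m/P), and satisfies every demand constraint with equality: ∑_{i=1}^ℓ ∑_{j=1}^m x_{ij} P^i = D_ℓ for all ℓ ∈ [m]. In particular, LP(m/P) is feasible. -/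
open Finset

theorem stmt_12 (m : ℕ) (hm : 1 ≤ m) (P : ℝ) (hP : 1 ≤ P) :
    let x : Fin m × Fin m → ℝ := fun _ => 1 / (m * P)
    (∀ p : Fin m × Fin m, 0 ≤ x p ∧ x p ≤ 1) ∧
    (∑ p : Fin m × Fin m, x p = m / P) ∧
    (∀ l : Fin m,
      ∑ p ∈ Finset.univ.filter (fun p : Fin m × Fin m => p.1 ≤ l), x p * P ^ (p.1.1 + 1)
        = ∑ j ∈ Finset.range (l.1 + 1), P ^ j) := by
  intro x
  have hm' : (1:ℝ) ≤ (m:ℝ) := by exact_mod_cast hm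
  have hP0 : (0:ℝ) < P := lt_of_lt_of_le one_pos hP
  have hm0 : (0:ℝ) < (m:ℝ) := lt_of_lt_of_le one_pos hm'
  have hmP : (0:ℝ) < (m:ℝ) * P := mul_pos hm0 hP0
  refine ⟨?_, ?_, ?_⟩
  · intro p
    constructor
    · positivity
    · rw [div_le_one hmP]; nlinarith
  · show ∑ _p : Fin m × Fin m, 1 / ((m:ℝ) * P) = m / P
    rw [Finset.sum_const, Finset.card_univ, Fintype.card_prod, Fintype.card_fin,
      nsmul_eq_mul]
    push_cast
    field_simp
  · intro l
    rw [Finset.sum_filter, Fintype.sum_prod_type]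
    simp only [x, Fin.le_def]
    have : ∀ i : Fin m, ∑ _j : Fin m,
        (if i.1 ≤ l.1 then 1 / ((m:ℝ) * P) * P ^ (i.1 + 1) else 0)
        = if i.1 ≤ l.1 then (m:ℝ) * (1 / ((m:ℝ) * P) * P ^ (i.1 + 1)) else 0 := by
      intro i
      rw [Finset.sum_const, Finset.card_univ, Fintype.card_fin, nsmul_eq_mul]
      split <;> simp
    rw [Finset.sum_congr rfl (fun i _ => this i)]
    rw [Fin.sum_univ_eq_sum_range
      (fun i => if i ≤ l.1 then (m:ℝ) * (1 / ((m:ℝ) * P) * P ^ (i + 1)) else 0)]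
    rw [← Finset.sum_filter]
    have hfil : (Finset.range m).filter (fun i => i ≤ l.1) = Finset.range (l.1 + 1) := by
      ext i
      simp only [Finset.mem_filter, Finset.mem_range]
      have := l.2
      omega
    rw [hfil]
    refine Finset.sum_congr rfl fun i _ => ?_
    field_simp
    ring
end

section
/- Fix m ≥ 1 and consider the scheduling instance. (a) For every real P ≥ 1, the 0/1 assignment x with x_{i,1} = 1 for each i ∈ [m] and all other coordinates 0 satisfies every demand constraint: ∑_{i=1}^ℓ ∑_{j=1}^m x_{ij} P^i ≥ D_ℓ for all ℓ ∈ [m]. (b) There exists a real P₀ > 1 such that for every real P ≥ P₀, every x ∈ {0,1}^{[m]×[m]} satisfying all m demand constraints has at least m coordinates equal to 1. Hence, for sufficiently large P, the minimum number of selected jobs over integral solutions is exactly m = √n. -/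
open Finset

lemma sched_group {m : ℕ} (S : Finset (Fin m × Fin m)) (l : ℕ) (P : ℝ) :
    ∑ p ∈ S.filter (fun p => p.1.1 ≤ l), P ^ (p.1.1 + 1)
      = ∑ i ∈ Finset.range (l + 1),
          ((S.filter (fun p => p.1.1 = i)).card : ℝ) * P ^ (i + 1) := by
  rw [← Finset.sum_fiberwise_of_maps_to (g := fun p => p.1.1) (t := Finset.range (l + 1))
      (by intro p hp
          simp only [mem_filter] at hp
          show p.1.1 ∈ Finset.range (l + 1)
          exact Finset.mem_range.2 (by omega))]
  refine Finset.sum_congr rfl fun i hi => ?_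
  rw [Finset.filter_filter]
  have hil : i ≤ l := Nat.lt_succ_iff.mp (Finset.mem_range.1 hi)
  have heq : S.filter (fun p => p.1.1 ≤ l ∧ p.1.1 = i) = S.filter (fun p => p.1.1 = i) := by
    apply Finset.filter_congr; intro p _
    constructor
    · exact fun h => h.2
    · exact fun h => ⟨by omega, h⟩
  rw [heq]
  rw [Finset.sum_congr rfl (fun p hp => by rw [(Finset.mem_filter.1 hp).2]),
    Finset.sum_const, nsmul_eq_mul]

lemma sched_claimB (P : ℝ) (hP : 1 ≤ P) (c : ℕ → ℕ) :
    ∀ l : ℕ, (∀ j, j < l → j + 1 ≤ ∑ i ∈ Finset.range (j + 1), c i) →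
    ∑ i ∈ Finset.range (l + 1), (c i : ℝ) * P ^ (i + 1)
      ≤ ∑ j ∈ Finset.range (∑ i ∈ Finset.range (l + 1), c i), P ^ (j + 1) := by
  intro l
  induction l with
  | zero =>
    intro _
    simp only [zero_add, Finset.sum_range_one]
    calc (c 0 : ℝ) * P ^ 1 = ∑ _j ∈ Finset.range (c 0), P ^ 1 := by
          rw [Finset.sum_const, nsmul_eq_mul, Finset.card_range]
      _ ≤ _ := Finset.sum_le_sum (fun j _ => pow_le_pow_right₀ hP (by omega))
  | succ l ih =>
    intro h
    rw [Finset.sum_range_succ, Finset.sum_range_succ (f := c),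
      Finset.sum_range_add (fun j => P ^ (j + 1)) (∑ i ∈ Finset.range (l + 1), c i) (c (l + 1))]
    have hK : l + 1 ≤ ∑ i ∈ Finset.range (l + 1), c i := h l (Nat.lt_succ_self l)
    have h2 : (c (l + 1) : ℝ) * P ^ (l + 1 + 1)
        ≤ ∑ j ∈ Finset.range (c (l + 1)), P ^ ((∑ i ∈ Finset.range (l + 1), c i) + j + 1) := by
      calc (c (l + 1) : ℝ) * P ^ (l + 1 + 1)
          = ∑ _j ∈ Finset.range (c (l + 1)), P ^ (l + 1 + 1) := by
            rw [Finset.sum_const, nsmul_eq_mul, Finset.card_range]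
        _ ≤ _ := Finset.sum_le_sum (fun j _ => pow_le_pow_right₀ hP (by omega))
    exact add_le_add (ih (fun j hj => h j (by omega))) h2

set_option maxHeartbeats 1000000 in
lemma sched_claimA {m : ℕ} (P : ℝ) (hP : 1 ≤ P) (S : Finset (Fin m × Fin m))
    (h : ∀ l : Fin m,
      schedDemand P l.1 ≤ ∑ p ∈ S.filter (fun p => p.1 ≤ l), P ^ (p.1.1 + 1)) :
    ∀ n, n < m → n + 1 ≤ ∑ i ∈ Finset.range (n + 1), (S.filter (fun p => p.1.1 = i)).card := by
  intro n
  induction n using Nat.strong_induction_on with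
  | _ n ih =>
    intro hn
    by_contra hcon
    push_neg at hcon
    have hKn : ∑ i ∈ Finset.range (n + 1), (S.filter (fun p => p.1.1 = i)).card ≤ n := by omega
    have hconstraint := h ⟨n, hn⟩
    have hfe : S.filter (fun p => p.1 ≤ (⟨n, hn⟩ : Fin m)) = S.filter (fun p => p.1.1 ≤ n) := by
      apply Finset.filter_congr; intro p _; exact Iff.rfl
    rw [hfe, sched_group] at hconstraint
    have hB := sched_claimB P hP (fun i => (S.filter (fun p => p.1.1 = i)).card) n
      (fun j hj => ih j hj (by omega))
    have hsub : ∑ j ∈ Finset.range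
          (∑ i ∈ Finset.range (n + 1), (S.filter (fun p => p.1.1 = i)).card), P ^ (j + 1)
        ≤ ∑ j ∈ Finset.range n, P ^ (j + 1) := by
      apply Finset.sum_le_sum_of_subset_of_nonneg
      · exact Finset.range_subset_range.2 hKn
      · intro j _ _; positivity
    have hD : schedDemand P n = (∑ j ∈ Finset.range n, P ^ (j + 1)) + 1 := by
      rw [schedDemand, Finset.sum_range_succ']
      simp
    rw [hD] at hconstraint
    linarith

theorem stmt_13 (m : ℕ) (hm : 1 ≤ m) :
    -- (a) selecting the first job of every block satisfies all demand constraints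
    (∀ P : ℝ, 1 ≤ P → ∀ l : Fin m,
      ∑ p ∈ (Finset.univ.filter (fun p : Fin m × Fin m => p.2.1 = 0)).filter
          (fun p => p.1 ≤ l), P ^ (p.1.1 + 1) ≥ schedDemand P l.1) ∧
    -- this selection has exactly m jobs
    ((Finset.univ.filter (fun p : Fin m × Fin m => p.2.1 = 0)).card = m) ∧
    -- (b) for large P, any 0/1 selection satisfying all demand constraints uses ≥ m jobs
    (∃ P0 : ℝ, 1 < P0 ∧ ∀ P : ℝ, P0 ≤ P →
      ∀ S : Finset (Fin m × Fin m),
        (∀ l : Fin m,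
          ∑ p ∈ S.filter (fun p => p.1 ≤ l), P ^ (p.1.1 + 1) ≥ schedDemand P l.1) →
        m ≤ S.card) := by
  haveI : NeZero m := ⟨by omega⟩
  set S0 : Finset (Fin m × Fin m) := Finset.univ.filter (fun p => p.2.1 = 0) with hS0
  have hfiber : ∀ i, i < m → (S0.filter (fun p => p.1.1 = i)).card = 1 := by
    intro i hi
    apply Finset.card_eq_one.mpr
    refine ⟨(⟨i, hi⟩, ⟨0, by omega⟩), ?_⟩
    ext p
    simp only [hS0, Finset.filter_filter, Finset.mem_filter, Finset.mem_univ, true_and,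
      Finset.mem_singleton]
    constructor
    · rintro ⟨h2, h1⟩
      exact Prod.ext (Fin.ext h1) (Fin.ext h2)
    · rintro rfl
      exact ⟨rfl, rfl⟩
  refine ⟨?_, ?_, ?_⟩
  · intro P hP l
    have hfe : S0.filter (fun p => p.1 ≤ l) = S0.filter (fun p => p.1.1 ≤ l.1) := by
      apply Finset.filter_congr; intro p _; exact Iff.rfl
    rw [ge_iff_le, hfe, sched_group]
    have hone : ∀ i ∈ Finset.range (l.1 + 1),
        ((S0.filter (fun p => p.1.1 = i)).card : ℝ) * P ^ (i + 1) = P ^ (i + 1) := by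
      intro i hi
      rw [hfiber i (by have := l.isLt; have := Finset.mem_range.1 hi; omega)]
      norm_num
    rw [Finset.sum_congr rfl hone]
    apply Finset.sum_le_sum
    intro i _
    exact pow_le_pow_right₀ hP (by omega)
  · have : S0 = Finset.univ ×ˢ ({(0 : Fin m)} : Finset (Fin m)) := by
      ext p
      simp only [hS0, Finset.mem_filter, Finset.mem_univ, true_and, Finset.mem_product,
        Finset.mem_singleton]
      exact ⟨fun h => Fin.ext h, fun h => congrArg Fin.val h⟩
    rw [this, Finset.card_product]
    simp
  · refine ⟨2, by norm_num, ?_⟩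
    intro P hP S hcon
    have hP1 : (1 : ℝ) ≤ P := by linarith
    have hA := sched_claimA P hP1 S (fun l => hcon l) (m - 1) (by omega)
    have hcard : S.card = ∑ i ∈ Finset.range m, (S.filter (fun p => p.1.1 = i)).card := by
      exact Finset.card_eq_sum_card_fiberwise
        (f := fun (p : Fin m × Fin m) => p.1.1) (t := Finset.range m)
        (fun p _ => Finset.mem_range.2 p.1.isLt)
    have hm1 : m - 1 + 1 = m := by omega
    rw [hm1] at hA
    omega
end

section
/- Let n ∈ ℕ, a ∈ ℝⁿ, b ∈ ℝ, and let y^n : 2^{[n]} → ℝ be arbitrary. Define y_I = ∑_{H : I ⊆ H ⊆ [n]} y^n_H for every I ⊆ [n], and for H ⊆ [n] write g(x_H) = ∑_{i ∈ H} a_i − b. Then for every I ⊆ [n]: ∑_{i=1}^n a_i y_{I ∪ {i}} − b y_I = ∑_{H : I ⊆ H ⊆ [n]} g(x_H) y^n_H. -/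
open Finset

theorem stmt_17 (n : ℕ) (a : Fin n → ℝ) (b : ℝ) (yn : Finset (Fin n) → ℝ) :
    let y : Finset (Fin n) → ℝ :=
      fun I => ∑ H ∈ Finset.univ.filter (fun H : Finset (Fin n) => I ⊆ H), yn H
    ∀ I : Finset (Fin n),
      (∑ i : Fin n, a i * y (insert i I)) - b * y I
        = ∑ H ∈ Finset.univ.filter (fun H : Finset (Fin n) => I ⊆ H),
            ((∑ i ∈ H, a i) - b) * yn H := by
  intro y I
  have key : ∀ i : Fin n,
      a i * y (insert i I)
        = ∑ H ∈ Finset.univ.filter (fun H : Finset (Fin n) => I ⊆ H),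
            (if i ∈ H then a i * yn H else 0) := by
    intro i
    simp only [y, Finset.mul_sum, ← Finset.sum_filter, Finset.filter_filter]
    congr 1
    ext H
    simp [Finset.insert_subset_iff, and_comm]
  simp only [key]
  rw [Finset.sum_comm]
  simp only [y, Finset.mul_sum, sub_mul, Finset.sum_sub_distrib, Finset.sum_mul,
    Finset.sum_ite_mem, Finset.univ_inter]
end
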